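/- arXiv:math/0311259 — 4 statements merged into one kernel-verified Lean document; each statement's English description precedes it below -/
import Mathlib

section
/- For n ≥ 1 and a specified subset R of {0,1,...,n} with |R| = k ≥ 1, the number of forests on vertex set {0,1,...,n} consisting of exactly k trees whose roots are exactly the elements of R equals k · (n+1)^{n-k}. -/
/-!
Sending every non-root vertex to its neighbour on the way to its root identifies the forests
rooted at `R` with the maps `f : V → V` that fix `R` pointwise and under which every vertex
eventually lands in `R`. Joyal's bijection turns such a map together with a marked vertex `v`
into a root `r ∈ R` together with an arbitrary map `g` fixing `R` pointwise: the path from `v`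
to its root `r` is rearranged into the cycles of `g` using a fixed enumeration of its vertex set,
and conversely the cyclic points of `g` outside `R`, enumerated the same way, are strung back
into a path ending at `r`. With `m = n + 1` vertices this gives
`m · #forests = k · m ^ (m - k)`.
-/

open Function SimpleGraph

variable {V : Type*}

theorem Set.MapsTo.subset_periodicPts {α : Type*} {f : α → α} {s : Set α} (hs : s.Finite)
    (hmaps : MapsTo f s s) (hinj : InjOn f s) : s ⊆ periodicPts f := by
  have : Finite s := hs
  intro x hx
  have hsemi : Semiconj Subtype.val (hmaps.restrict f s s) f := fun _ => rfl
  exact hsemi.mapsTo_periodicPts ((hmaps.restrict_inj.2 hinj).mem_periodicPts ⟨x, hx⟩)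

theorem Set.MapsTo.mem_of_iterate_mem {α : Type*} {f : α → α} {s : Set α} {x : α} {n : ℕ}
    (hmaps : MapsTo f s s) (hx : x ∈ periodicPts f) (hn : f^[n] x ∈ s) : x ∈ s := by
  obtain ⟨m, hm, hper⟩ := hx
  have hle : n ≤ m * n := Nat.le_mul_of_pos_left n hm
  rw [← (hper.mul_const n).eq, ← Nat.sub_add_cancel hle, iterate_add_apply]
  exact hmaps.iterate _ hn

theorem Function.exists_iterate_mem_periodicPts {α : Type*} [Finite α] (f : α → α) (x : α) :
    ∃ a, f^[a] x ∈ periodicPts f := by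
  obtain ⟨a, b, hab, h⟩ := Set.finite_univ.exists_lt_map_eq_of_forall_mem
    (f := fun n : ℕ => f^[n] x) fun _ => Set.mem_univ _
  refine ⟨a, mk_mem_periodicPts (Nat.sub_pos_of_lt hab) ?_⟩
  change f^[b - a] (f^[a] x) = f^[a] x
  rw [← iterate_add_apply, Nat.sub_add_cancel hab.le]
  exact h.symm

theorem SimpleGraph.Reachable.exists_adj_dist_lt {G : SimpleGraph V} {v w : V}
    (h : G.Reachable v w) (hne : v ≠ w) : ∃ u, G.Adj v u ∧ G.dist u w < G.dist v w := by
  obtain ⟨p, hp⟩ := h.exists_walk_length_eq_dist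
  cases p with
  | nil => exact absurd rfl hne
  | cons hadj q =>
    exact ⟨_, hadj, (dist_le q).trans_lt (by rw [← hp, Walk.length_cons]; omega)⟩

theorem SimpleGraph.IsAcyclic.adj_of_le_of_reachable {G H : SimpleGraph V} {v w : V}
    (hG : G.IsAcyclic) (hle : H ≤ G) (hadj : G.Adj v w) (hH : H.Reachable v w) : H.Adj v w := by
  by_contra hnot
  refine isBridge_iff.1 (isAcyclic_iff_forall_adj_isBridge.1 hG hadj) (hH.mono fun a b hab => ?_)
  refine deleteEdges_adj.2 ⟨hle hab, fun he => hnot ?_⟩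
  rcases Sym2.eq_iff.1 (Set.mem_singleton_iff.1 he) with ⟨rfl, rfl⟩ | ⟨rfl, rfl⟩
  exacts [hab, hab.symm]

noncomputable section

namespace RootedForest

open scoped Classical

variable {R : Finset V} {f g : V → V} {v w x r : V}

structure IsParentMap (R : Finset V) (f : V → V) : Prop where
  apply_of_mem : ∀ r ∈ R, f r = r
  exists_iterate_mem : ∀ v, ∃ j, f^[j] v ∈ R

def depth (R : Finset V) (f : V → V) (v : V) : ℕ := sInf {j | f^[j] v ∈ R}

def root (R : Finset V) (f : V → V) (v : V) : V := f^[depth R f v] v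

namespace IsParentMap

variable (hf : IsParentMap R f)
include hf

theorem iterate_mem_iff {j : ℕ} : f^[j] v ∈ R ↔ depth R f v ≤ j := by
  refine ⟨fun h => Nat.sInf_le h, fun h => ?_⟩
  obtain ⟨i, rfl⟩ := Nat.exists_eq_add_of_le h
  rw [add_comm, iterate_add_apply]
  have hroot : f^[depth R f v] v ∈ R := Nat.sInf_mem (hf.exists_iterate_mem v)
  rwa [iterate_fixed (hf.apply_of_mem _ hroot)]

theorem depth_eq_zero_iff : depth R f v = 0 ↔ v ∈ R := by
  simpa using (hf.iterate_mem_iff (v := v) (j := 0)).symm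

theorem depth_iterate (i : ℕ) : depth R f (f^[i] v) = depth R f v - i := by
  have : {j | f^[j] (f^[i] v) ∈ R} = Set.Ici (depth R f v - i) := by
    ext j
    simp only [Set.mem_ofPred_eq, Set.mem_Ici, ← iterate_add_apply, hf.iterate_mem_iff]
    omega
  rw [depth, this, csInf_Ici]

theorem root_mem : root R f v ∈ R := hf.iterate_mem_iff.2 le_rfl

theorem root_of_mem (hv : v ∈ R) : root R f v = v := by
  rw [root, hf.depth_eq_zero_iff.2 hv, iterate_zero_apply]

theorem depth_apply (hv : v ∉ R) : depth R f (f v) + 1 = depth R f v := by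
  have h1 := hf.depth_iterate (v := v) 1
  have := hf.depth_eq_zero_iff.not.2 hv
  rw [iterate_one] at h1
  omega

theorem root_apply : root R f (f v) = root R f v := by
  by_cases hv : v ∈ R
  · rw [hf.apply_of_mem v hv]
  · rw [root, root, ← hf.depth_apply hv, iterate_succ_apply]

theorem iterate_injOn {i j : ℕ} (hi : i ≤ depth R f v) (hj : j ≤ depth R f v)
    (h : f^[i] v = f^[j] v) : i = j := by
  have := congrArg (depth R f) h
  rw [hf.depth_iterate, hf.depth_iterate] at this
  omega

theorem notMem_periodicPts (hv : v ∉ R) : v ∉ periodicPts f := by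
  rintro ⟨n, hn, hper⟩
  have := hf.depth_iterate (v := v) n
  rw [hper.eq] at this
  have := hf.depth_eq_zero_iff.not.2 hv
  omega

theorem apply_ne (hv : v ∉ R) : f v ≠ v := fun h =>
  hf.notMem_periodicPts hv (mk_mem_periodicPts one_pos h)

end IsParentMap

def parentGraph (R : Finset V) (f : V → V) : SimpleGraph V :=
  fromRel fun v w => v ∉ R ∧ f v = w

theorem parentGraph_adj : (parentGraph R f).Adj v w ↔
    v ≠ w ∧ ((v ∉ R ∧ f v = w) ∨ (w ∉ R ∧ f w = v)) :=
  fromRel_adj _ _ _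

namespace IsParentMap

variable (hf : IsParentMap R f)
include hf

theorem parentGraph_adj_apply (hv : v ∉ R) : (parentGraph R f).Adj v (f v) :=
  parentGraph_adj.2 ⟨(hf.apply_ne hv).symm, Or.inl ⟨hv, rfl⟩⟩

theorem reachable_iterate (j : ℕ) : (parentGraph R f).Reachable v (f^[j] v) := by
  induction j with
  | zero => rfl
  | succ j ih =>
    rw [iterate_succ_apply']
    by_cases hj : f^[j] v ∈ R
    · rwa [hf.apply_of_mem _ hj]
    · exact ih.trans (hf.parentGraph_adj_apply hj).reachable

theorem root_eq_of_reachable (h : (parentGraph R f).Reachable v w) : root R f v = root R f w := by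
  obtain ⟨p⟩ := h
  induction p with
  | nil => rfl
  | cons hadj _ ih =>
    refine Eq.trans ?_ ih
    obtain ⟨-, ⟨-, rfl⟩ | ⟨-, rfl⟩⟩ := parentGraph_adj.1 hadj
    exacts [hf.root_apply.symm, hf.root_apply]

theorem existsUnique_root (c : (parentGraph R f).ConnectedComponent) :
    ∃! r, r ∈ R ∧ (parentGraph R f).connectedComponentMk r = c := by
  induction c using ConnectedComponent.ind with
  | h v =>
    refine ⟨root R f v,
      ⟨hf.root_mem, ConnectedComponent.eq.2 (hf.reachable_iterate _).symm⟩, ?_⟩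
    rintro r ⟨hr, hrv⟩
    rw [← hf.root_of_mem hr]
    exact hf.root_eq_of_reachable (ConnectedComponent.eq.1 hrv)

/-- Removing the edge from `v` to its parent, the descendants of `v` are closed under adjacency,
so the parent (which is no descendant) is unreachable. -/
theorem isBridge (hv : v ∉ R) : (parentGraph R f).IsBridge s(v, f v) := by
  rw [isBridge_iff]
  rintro ⟨p⟩
  suffices ∀ {a b} (p : ((parentGraph R f).deleteEdges {s(v, f v)}).Walk a b),
      (∃ j, f^[j] a = v) → ∃ j, f^[j] b = v by
    obtain ⟨j, hj⟩ := this p ⟨0, rfl⟩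
    exact hf.notMem_periodicPts hv (mk_mem_periodicPts j.succ_pos hj)
  intro a b p
  induction p with
  | nil => exact id
  | cons hadj _ ih =>
    rintro ⟨j, hj⟩
    apply ih
    obtain ⟨hadj, hne⟩ := deleteEdges_adj.1 hadj
    obtain ⟨-, ⟨-, rfl⟩ | ⟨-, rfl⟩⟩ := parentGraph_adj.1 hadj
    · cases j with
      | zero => exact absurd (by rw [← hj]; rfl) hne
      | succ j => exact ⟨j, hj⟩
    · exact ⟨j + 1, hj⟩

theorem isAcyclic : (parentGraph R f).IsAcyclic := by
  refine isAcyclic_iff_forall_adj_isBridge.2 fun v w hadj => ?_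
  obtain ⟨-, ⟨hv, rfl⟩ | ⟨hw, rfl⟩⟩ := parentGraph_adj.1 hadj
  · exact hf.isBridge hv
  · exact Sym2.eq_swap ▸ hf.isBridge hw

end IsParentMap

theorem exists_isParentMap_parentGraph_eq {G : SimpleGraph V} (hG : G.IsAcyclic)
    (hroots : ∀ c : G.ConnectedComponent, ∃! r, r ∈ R ∧ G.connectedComponentMk r = c) :
    ∃ f, IsParentMap R f ∧ parentGraph R f = G := by
  choose ρ hρ hρ_unique using fun v => hroots (G.connectedComponentMk v)
  have reachable_ρ v : G.Reachable v (ρ v) := (ConnectedComponent.eq.1 (hρ v).2).symm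
  have ρ_eq {v r} (hr : r ∈ R) (h : G.Reachable v r) : r = ρ v :=
    hρ_unique v r ⟨hr, ConnectedComponent.eq.2 h.symm⟩
  have closer v (hv : v ∉ R) : ∃ u, G.Adj v u ∧ G.dist u (ρ v) < G.dist v (ρ v) :=
    (reachable_ρ v).exists_adj_dist_lt fun h => hv (h ▸ (hρ v).1)
  choose! p hp_adj hp_dist using closer
  set f : V → V := fun v => if v ∈ R then v else p v
  have hf : IsParentMap R f := by
    refine ⟨fun r hr => if_pos hr, fun v => ?_⟩
    induction hn : G.dist v (ρ v) using Nat.strong_induction_on generalizing v with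
    | _ n ih =>
      by_cases hv : v ∈ R
      · exact ⟨0, hv⟩
      have hρp : ρ (p v) = ρ v :=
        (ρ_eq (hρ v).1 ((hp_adj v hv).reachable.symm.trans (reachable_ρ v))).symm
      obtain ⟨j, hj⟩ := ih _ (hn ▸ hρp ▸ hp_dist v hv) (p v) rfl
      exact ⟨j + 1, by simpa [f, hv] using hj⟩
  have hle : parentGraph R f ≤ G := fun v w hadj => by
    obtain ⟨-, ⟨hv, rfl⟩ | ⟨hw, rfl⟩⟩ := parentGraph_adj.1 hadj
    · simpa [f, hv] using hp_adj v hv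
    · simpa [f, hw] using (hp_adj w hw).symm
  have root_eq v : root R f v = ρ v := ρ_eq hf.root_mem ((hf.reachable_iterate _).mono hle)
  refine ⟨f, hf, le_antisymm hle fun v w hadj => hG.adj_of_le_of_reachable hle hadj ?_⟩
  have hρvw : ρ v = ρ w := (ρ_eq (hρ w).1 (hadj.reachable.trans (reachable_ρ w))).symm
  refine (hf.reachable_iterate (depth R f v)).trans ?_
  rw [← root, root_eq, hρvw, ← root_eq]
  exact (hf.reachable_iterate _).symm

theorem parentGraph_injOn : Set.InjOn (parentGraph R) {f | IsParentMap R f} := by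
  intro f hf g hg h
  funext v
  induction hn : depth R f v using Nat.strong_induction_on generalizing v with
  | _ n ih =>
    by_cases hv : v ∈ R
    · rw [hf.apply_of_mem v hv, hg.apply_of_mem v hv]
    obtain ⟨-, ⟨-, hgv⟩ | ⟨-, hgfv⟩⟩ :=
      parentGraph_adj.1 (h ▸ hf.parentGraph_adj_apply hv)
    · exact hgv.symm
    · have hlt : depth R f (f v) < n := by
        have := hf.depth_apply hv
        omega
      have h2 : f^[2] v = v := (ih _ hlt (f v) rfl).trans hgfv
      exact absurd (mk_mem_periodicPts two_pos h2) (hf.notMem_periodicPts hv)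

def parentMapEquivForest (R : Finset V) : {f : V → V // IsParentMap R f} ≃
    {G : SimpleGraph V // G.IsAcyclic ∧
      ∀ c : G.ConnectedComponent, ∃! r, r ∈ R ∧ G.connectedComponentMk r = c} :=
  Equiv.ofBijective (fun f => ⟨parentGraph R f, f.2.isAcyclic, f.2.existsUnique_root⟩)
    ⟨fun f g h => Subtype.ext (parentGraph_injOn f.2 g.2 (congrArg Subtype.val h)),
      fun G =>
        let ⟨f, hf, hG⟩ := exists_isParentMap_parentGraph_eq G.2.1 G.2.2
        ⟨⟨f, hf⟩, Subtype.ext hG⟩⟩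

def pathSet (R : Finset V) (f : V → V) (v : V) : Finset V :=
  (Finset.range (depth R f v)).image (f^[·] v)

theorem mem_pathSet : x ∈ pathSet R f v ↔ ∃ i < depth R f v, f^[i] v = x := by
  simp [pathSet]

/-- Joyal's map: listing the vertices of the path from `v` to its root in a fixed enumeration
of the path set and sending the `i`-th of them to the `i`-th vertex of the path turns the path
into a permutation of its vertices. -/
def pathToCycles (R : Finset V) (f : V → V) (v : V) : V → V := fun x =>
  if x ∈ pathSet R f v then f^[(pathSet R f v).toList.idxOf x] v else f x

theorem pathToCycles_of_notMem_pathSet (hx : x ∉ pathSet R f v) : pathToCycles R f v x = f x :=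
  if_neg hx

namespace IsParentMap

variable (hf : IsParentMap R f)
include hf

theorem card_pathSet : (pathSet R f v).card = depth R f v := by
  rw [pathSet, Finset.card_image_of_injOn, Finset.card_range]
  intro i hi j hj h
  simp only [Finset.coe_range, Set.mem_Iio] at hi hj
  exact hf.iterate_injOn hi.le hj.le h

theorem notMem_of_mem_pathSet (hx : x ∈ pathSet R f v) : x ∉ R := by
  obtain ⟨i, hi, rfl⟩ := mem_pathSet.1 hx
  exact fun h => (hf.iterate_mem_iff.1 h).not_gt hi

theorem pathToCycles_apply_of_mem (hr : r ∈ R) : pathToCycles R f v r = r := by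
  rw [pathToCycles_of_notMem_pathSet (mt hf.notMem_of_mem_pathSet (not_not.2 hr)),
    hf.apply_of_mem r hr]

theorem mapsTo_pathToCycles :
    Set.MapsTo (pathToCycles R f v) (pathSet R f v) (pathSet R f v) := fun x hx => by
  rw [Finset.mem_coe] at hx
  have hlt := List.idxOf_lt_length_of_mem (Finset.mem_toList.2 hx)
  rw [Finset.length_toList, hf.card_pathSet] at hlt
  rw [pathToCycles, if_pos hx]
  exact mem_pathSet.2 ⟨_, hlt, rfl⟩

theorem injOn_pathToCycles : Set.InjOn (pathToCycles R f v) (pathSet R f v) := by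
  intro x hx y hy h
  rw [Finset.mem_coe, ← Finset.mem_toList] at hx hy
  have hlen := (Finset.length_toList (pathSet R f v)).trans hf.card_pathSet
  rw [pathToCycles, pathToCycles, if_pos (Finset.mem_toList.1 hx),
    if_pos (Finset.mem_toList.1 hy)] at h
  refine (List.idxOf_inj hx).1 (hf.iterate_injOn ?_ ?_ h)
  · exact hlen ▸ (List.idxOf_lt_length_of_mem hx).le
  · exact hlen ▸ (List.idxOf_lt_length_of_mem hy).le

end IsParentMap

section Fintype

variable [Fintype V]

def cyclicSet (R : Finset V) (g : V → V) : Finset V := {x | x ∉ R ∧ x ∈ periodicPts g}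

theorem mem_cyclicSet : x ∈ cyclicSet R g ↔ x ∉ R ∧ x ∈ periodicPts g := by
  simp [cyclicSet]

theorem IsParentMap.cyclicSet_pathToCycles (hf : IsParentMap R f) :
    cyclicSet R (pathToCycles R f v) = pathSet R f v := by
  ext x
  rw [mem_cyclicSet]
  constructor
  · rintro ⟨hxR, hx⟩
    by_contra hxP
    have avoid n : (pathToCycles R f v)^[n] x ∉ pathSet R f v := fun hn =>
      hxP (hf.mapsTo_pathToCycles.mem_of_iterate_mem hx hn)
    have agree n : (pathToCycles R f v)^[n] x = f^[n] x := by
      induction n with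
      | zero => rfl
      | succ n ih =>
        rw [iterate_succ_apply', iterate_succ_apply', pathToCycles_of_notMem_pathSet (avoid n),
          ih]
    obtain ⟨n, hn, hper⟩ := hx
    exact hf.notMem_periodicPts hxR ⟨n, hn, (agree n).symm.trans hper⟩
  · intro hx
    exact ⟨hf.notMem_of_mem_pathSet hx, hf.mapsTo_pathToCycles.subset_periodicPts
      (Finset.finite_toSet _) hf.injOn_pathToCycles hx⟩

theorem bijOn_cyclicSet (hg : ∀ r ∈ R, g r = r) :
    Set.BijOn g (cyclicSet R g) (cyclicSet R g) := by
  have hper := bijOn_periodicPts (f := g)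
  refine ⟨fun x hx => ?_, hper.injOn.mono fun x hx => (mem_cyclicSet.1 hx).2, fun y hy => ?_⟩
  · obtain ⟨hxR, hx⟩ := mem_cyclicSet.1 hx
    refine mem_cyclicSet.2 ⟨fun hgx => hxR ?_, hper.mapsTo hx⟩
    obtain ⟨n, hn, hxn⟩ := hx
    rwa [← hxn.eq, ← Nat.sub_add_cancel hn, iterate_add_apply, iterate_one,
      iterate_fixed (hg _ hgx)]
  · obtain ⟨hyR, hy⟩ := mem_cyclicSet.1 hy
    obtain ⟨x, hx, rfl⟩ := hper.surjOn hy
    exact ⟨x, mem_cyclicSet.2 ⟨fun hxR => hyR (by rwa [hg x hxR]), hx⟩, rfl⟩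

def cycleList (R : Finset V) (g : V → V) : List V := (cyclicSet R g).toList.map g

theorem length_cycleList : (cycleList R g).length = (cyclicSet R g).card := by
  rw [cycleList, List.length_map, Finset.length_toList]

theorem nodup_cycleList (hg : ∀ r ∈ R, g r = r) : (cycleList R g).Nodup :=
  (Finset.nodup_toList _).map_on fun _ hx _ hy =>
    (bijOn_cyclicSet hg).injOn (Finset.mem_toList.1 hx) (Finset.mem_toList.1 hy)

theorem mem_cycleList (hg : ∀ r ∈ R, g r = r) :
    x ∈ cycleList R g ↔ x ∈ cyclicSet R g := by
  simp only [cycleList, List.mem_map, Finset.mem_toList]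
  exact ⟨fun ⟨y, hy, hyx⟩ => hyx ▸ (bijOn_cyclicSet hg).mapsTo hy,
    fun hx => (bijOn_cyclicSet hg).surjOn hx⟩

/-- Inverse of Joyal's map: the images under `g` of the cyclic points, in the enumeration of
the cyclic set used by `pathToCycles`, followed by `r`, become a path. -/
def cyclesToPath (R : Finset V) (g : V → V) (r : V) : V → V := fun x =>
  if x ∈ cycleList R g then (cycleList R g).getD ((cycleList R g).idxOf x + 1) r else g x

theorem cyclesToPath_of_notMem (hx : x ∉ cycleList R g) : cyclesToPath R g r x = g x :=
  if_neg hx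

theorem cyclesToPath_getD (hg : ∀ r ∈ R, g r = r) {i : ℕ} (hi : i < (cycleList R g).length) :
    cyclesToPath R g r ((cycleList R g).getD i r) = (cycleList R g).getD (i + 1) r := by
  rw [List.getD_eq_getElem _ _ hi, cyclesToPath, if_pos (List.getElem_mem hi),
    (nodup_cycleList hg).idxOf_getElem]

theorem iterate_cyclesToPath_getD (hg : ∀ r ∈ R, g r = r) {i j : ℕ}
    (h : i + j ≤ (cycleList R g).length) :
    (cyclesToPath R g r)^[j] ((cycleList R g).getD i r) = (cycleList R g).getD (i + j) r := by
  induction j with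
  | zero => rfl
  | succ j ih =>
    rw [iterate_succ_apply', ih (by omega), cyclesToPath_getD hg (by omega), add_assoc]

theorem getD_cycleList_notMem (hg : ∀ r ∈ R, g r = r) {i : ℕ}
    (hi : i < (cycleList R g).length) :
    (cycleList R g).getD i r ∉ R := by
  rw [List.getD_eq_getElem _ _ hi]
  exact (mem_cyclicSet.1 ((mem_cycleList hg).1 (List.getElem_mem hi))).1

theorem isParentMap_cyclesToPath (hg : ∀ r ∈ R, g r = r) (hr : r ∈ R) :
    IsParentMap R (cyclesToPath R g r) := by
  refine ⟨fun x hx => ?_, fun x => ?_⟩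
  · rw [cyclesToPath_of_notMem fun h => (mem_cyclicSet.1 ((mem_cycleList hg).1 h)).1 hx,
      hg x hx]
  have reach_of_mem {x} (hx : x ∈ cycleList R g) : ∃ j, (cyclesToPath R g r)^[j] x ∈ R := by
    obtain ⟨i, hi, rfl⟩ := List.getElem_of_mem hx
    refine ⟨(cycleList R g).length - i, ?_⟩
    rw [← List.getD_eq_getElem _ r hi, iterate_cyclesToPath_getD hg (by omega),
      List.getD_eq_default _ _ (by omega)]
    exact hr
  obtain ⟨a, ha⟩ := exists_iterate_mem_periodicPts g x
  induction a generalizing x with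
  | zero =>
    by_cases hxR : x ∈ R
    · exact ⟨0, hxR⟩
    · exact reach_of_mem ((mem_cycleList hg).2 (mem_cyclicSet.2 ⟨hxR, ha⟩))
  | succ a ih =>
    by_cases hxR : x ∈ R
    · exact ⟨0, hxR⟩
    by_cases hxL : x ∈ cycleList R g
    · exact reach_of_mem hxL
    obtain ⟨j, hj⟩ := ih (g x) (by rwa [← iterate_succ_apply])
    exact ⟨j + 1, by rwa [iterate_succ_apply, cyclesToPath_of_notMem hxL]⟩

section RightInverse

variable (hg : ∀ r ∈ R, g r = r) (hr : r ∈ R)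
include hg

theorem iterate_cyclesToPath_getD_zero {j : ℕ} (hj : j ≤ (cycleList R g).length) :
    (cyclesToPath R g r)^[j] ((cycleList R g).getD 0 r) = (cycleList R g).getD j r := by
  simpa using iterate_cyclesToPath_getD hg (r := r) (i := 0) (by simpa using hj)

include hr

theorem depth_cyclesToPath :
    depth R (cyclesToPath R g r) ((cycleList R g).getD 0 r) = (cycleList R g).length := by
  have hf := isParentMap_cyclesToPath hg hr
  apply le_antisymm
  · rw [← hf.iterate_mem_iff, iterate_cyclesToPath_getD_zero hg le_rfl,
      List.getD_eq_default _ _ le_rfl]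
    exact hr
  · by_contra! h
    have := hf.root_mem (v := (cycleList R g).getD 0 r)
    rw [root, iterate_cyclesToPath_getD_zero hg h.le] at this
    exact getD_cycleList_notMem hg h this

theorem root_cyclesToPath : root R (cyclesToPath R g r) ((cycleList R g).getD 0 r) = r := by
  rw [root, depth_cyclesToPath hg hr, iterate_cyclesToPath_getD_zero hg le_rfl,
    List.getD_eq_default _ _ le_rfl]

theorem pathSet_cyclesToPath :
    pathSet R (cyclesToPath R g r) ((cycleList R g).getD 0 r) = cyclicSet R g := by
  ext x
  rw [mem_pathSet, depth_cyclesToPath hg hr, ← mem_cycleList hg, List.mem_iff_getElem]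
  refine exists_congr fun i =>
    ⟨fun ⟨hi, h⟩ => ⟨hi, ?_⟩, fun ⟨hi, h⟩ => ⟨hi, ?_⟩⟩
  · rwa [iterate_cyclesToPath_getD_zero hg hi.le, List.getD_eq_getElem _ _ hi] at h
  · rwa [iterate_cyclesToPath_getD_zero hg hi.le, List.getD_eq_getElem _ _ hi]

theorem pathToCycles_cyclesToPath :
    pathToCycles R (cyclesToPath R g r) ((cycleList R g).getD 0 r) = g := by
  funext x
  by_cases hx : x ∈ cyclicSet R g
  · have hlt : (cyclicSet R g).toList.idxOf x < (cycleList R g).length := by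
      rw [cycleList, List.length_map]
      exact List.idxOf_lt_length_of_mem (Finset.mem_toList.2 hx)
    rw [pathToCycles, pathSet_cyclesToPath hg hr, if_pos hx,
      iterate_cyclesToPath_getD_zero hg hlt.le, List.getD_eq_getElem _ _ hlt]
    simp [cycleList]
  · rw [pathToCycles_of_notMem_pathSet (pathSet_cyclesToPath hg hr ▸ hx),
      cyclesToPath_of_notMem (mt (mem_cycleList hg).1 hx)]

end RightInverse

namespace IsParentMap

variable (hf : IsParentMap R f)
include hf

theorem cycleList_pathToCycles :
    cycleList R (pathToCycles R f v) = (List.range (depth R f v)).map (f^[·] v) := by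
  have hC := hf.cyclicSet_pathToCycles (v := v)
  apply List.ext_getElem
  · rw [length_cycleList, hC, hf.card_pathSet, List.length_map, List.length_range]
  · intro i _ _
    simp only [cycleList, hC, List.getElem_map, List.getElem_range]
    rw [pathToCycles, if_pos (Finset.mem_toList.1 (List.getElem_mem _)),
      (Finset.nodup_toList _).idxOf_getElem]

theorem getD_cycleList_pathToCycles {i : ℕ} (hi : i ≤ depth R f v) :
    (cycleList R (pathToCycles R f v)).getD i (root R f v) = f^[i] v := by
  rw [hf.cycleList_pathToCycles]
  rcases hi.lt_or_eq with hi | rfl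
  · rw [List.getD_eq_getElem _ _ (by simpa using hi), List.getElem_map, List.getElem_range]
  · rw [List.getD_eq_default _ _ (by simp), root]

theorem cyclesToPath_pathToCycles : cyclesToPath R (pathToCycles R f v) (root R f v) = f := by
  have hψ : ∀ r ∈ R, pathToCycles R f v r = r := fun _ => hf.pathToCycles_apply_of_mem
  have hlen : (cycleList R (pathToCycles R f v)).length = depth R f v := by
    rw [length_cycleList, hf.cyclicSet_pathToCycles, hf.card_pathSet]
  funext x
  by_cases hx : x ∈ pathSet R f v
  · obtain ⟨i, hi, rfl⟩ := mem_pathSet.1 hx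
    rw [← hf.getD_cycleList_pathToCycles hi.le, cyclesToPath_getD hψ (hlen ▸ hi),
      hf.getD_cycleList_pathToCycles hi, hf.getD_cycleList_pathToCycles hi.le,
      iterate_succ_apply']
  · rw [cyclesToPath_of_notMem (by rwa [mem_cycleList hψ, hf.cyclicSet_pathToCycles]),
      pathToCycles_of_notMem_pathSet hx]

end IsParentMap

def joyalEquiv (R : Finset V) :
    V × {f : V → V // IsParentMap R f} ≃ R × {g : V → V // ∀ r ∈ R, g r = r} where
  toFun p := (⟨root R p.2 p.1, p.2.2.root_mem⟩,
    ⟨pathToCycles R p.2 p.1, fun _ => p.2.2.pathToCycles_apply_of_mem⟩)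
  invFun q := ((cycleList R q.2).getD 0 q.1,
    ⟨cyclesToPath R q.2 q.1, isParentMap_cyclesToPath q.2.2 q.1.2⟩)
  left_inv := fun ⟨_, _, hf⟩ => Prod.ext (hf.getD_cycleList_pathToCycles (Nat.zero_le _))
    (Subtype.ext hf.cyclesToPath_pathToCycles)
  right_inv := fun ⟨⟨_, hr⟩, _, hg⟩ => Prod.ext (Subtype.ext (root_cyclesToPath hg hr))
    (Subtype.ext (pathToCycles_cyclesToPath hg hr))

theorem card_maps_fixing (R : Finset V) :
    Nat.card {g : V → V // ∀ r ∈ R, g r = r} =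
      Fintype.card V ^ (Fintype.card V - R.card) := by
  rw [Nat.card_congr (Equiv.subtypePiEquivPi (p := fun x y => x ∈ R → y = x)), Nat.card_pi]
  have hcard x : Nat.card {y : V // x ∈ R → y = x} = if x ∈ R then 1 else Fintype.card V := by
    split_ifs with hx <;> simp [hx]
  simp_rw [hcard]
  rw [Finset.prod_ite, Finset.prod_const_one, one_mul, Finset.prod_const]
  simp [Finset.filter_not, Finset.card_sdiff]

theorem card_isParentMap_mul_card (R : Finset V) :
    Nat.card {f : V → V // IsParentMap R f} * Fintype.card V =
      R.card * Fintype.card V ^ (Fintype.card V - R.card) := by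
  have := Nat.card_congr (joyalEquiv R)
  rwa [Nat.card_prod, Nat.card_prod, card_maps_fixing, Nat.card_eq_fintype_card (α := V),
    Nat.card_eq_fintype_card (α := R), Fintype.card_coe, mul_comm] at this

end Fintype

end RootedForest

end

theorem card_forests_with_given_roots_general (n k : ℕ)
    (R : Finset (Fin (n + 1))) (hR : R.card = k) :
    (Nat.card {G : SimpleGraph (Fin (n + 1)) // G.IsAcyclic ∧
        ∀ c : G.ConnectedComponent, ∃! r, r ∈ R ∧ G.connectedComponentMk r = c} : ℚ) =
      (k : ℚ) * ((n : ℚ) + 1) ^ ((n : ℤ) - k) := by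
  have hcount := RootedForest.card_isParentMap_mul_card R
  rw [Fintype.card_fin, hR] at hcount
  have hk : k ≤ n + 1 := hR ▸ (Finset.card_le_univ R).trans_eq (Fintype.card_fin _)
  have hpos : (n : ℚ) + 1 ≠ 0 := by positivity
  rw [← Nat.card_congr (RootedForest.parentMapEquivForest R),
    show (n : ℤ) - k = ((n + 1 - k : ℕ) : ℤ) - 1 by omega, zpow_sub₀ hpos, zpow_natCast,
    zpow_one, ← mul_div_assoc, eq_div_iff hpos]
  exact_mod_cast hcount

/-- For `n ≥ 1` and a specified set `R` of `k ≥ 1` roots in `{0,1,…,n}`, the number of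
forests on `{0,1,…,n}` (acyclic graphs each of whose connected components contains
exactly one element of `R`) is `k · (n+1)^(n-k)`.  The exponent is taken in `ℤ`
since it equals `-1` when `k = n+1`. -/
theorem card_forests_with_given_roots (n k : ℕ) (hn : 1 ≤ n)
    (R : Finset (Fin (n + 1))) (hR : R.card = k) (hk : 1 ≤ k) :
    (Nat.card {G : SimpleGraph (Fin (n + 1)) // G.IsAcyclic ∧
        ∀ c : G.ConnectedComponent, ∃! r, r ∈ R ∧ G.connectedComponentMk r = c} : ℚ) =
      (k : ℚ) * ((n : ℚ) + 1) ^ ((n : ℤ) - k) :=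
  card_forests_with_given_roots_general n k R hR
end

section
/- The number of forests of rooted trees on the vertex set {1,...,n} equals (n+1)^{n-1}. -/
/-- A forest of rooted trees on `{1,…,n}`: an acyclic graph together with a choice of
one distinguished root in each connected component. -/
def RootedForest (n : ℕ) :=
  (G : {H : SimpleGraph (Fin n) // H.IsAcyclic}) ×
    {r : G.1.ConnectedComponent → Fin n // ∀ c, G.1.connectedComponentMk (r c) = c}

/-!
A rooted forest is the same as a parent map `f : V → V ⊕ Unit`: a vertex is sent to its
neighbour towards the root, a root to the point of `Unit`, and following parents always
terminates. It is easier to count the forests whose roots carry labels in `β`, i.e. the parent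
maps `α → α ⊕ β`. Removing the set `S` of roots, of size `k`, leaves a forest on the other
`n - k` vertices whose roots are labelled by their parents in `S`; so if `F(n, m)` counts these
maps for `|α| = n`, `|β| = m`, then
  `F(n, m) = ∑ₖ C(n, k) mᵏ F(n - k, k)`.
By strong induction and `k C(n, k) = n C(n - 1, k - 1)`, the binomial theorem then gives
`(n + m) F(n, m) = m (n + m)ⁿ`, and `m = 1` yields `(n + 1)ⁿ⁻¹`.
-/

open Finset SimpleGraph

universe u

theorem Finset.sum_powerset_card_mul_pow_mul_pow {R ι : Type*} [CommSemiring R] (x y : R)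
    (s : Finset ι) :
    ∑ t ∈ s.powerset, (#t * x ^ #t * y ^ (#s - #t) : R) = #s * x * (x + y) ^ (#s - 1) := by
  rw [sum_powerset_apply_card fun k => (k * x ^ k * y ^ (#s - k) : R)]
  cases #s with
  | zero => simp
  | succ n =>
    rw [sum_range_succ', add_pow, mul_sum]
    simp only [Nat.cast_zero, zero_mul, smul_zero, add_zero, Nat.add_sub_cancel]
    refine sum_congr rfl fun k _ => ?_
    have hchoose : ((n + 1).choose (k + 1) : R) * (k + 1 : ℕ) = (n + 1 : ℕ) * n.choose k := by
      rw [← Nat.cast_mul, ← Nat.cast_mul, Nat.add_one_mul_choose_eq]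
    rw [nsmul_eq_mul, show n + 1 - (k + 1) = n - k by omega]
    calc _ = ((n + 1).choose (k + 1) * (k + 1 : ℕ) : R) * (x ^ (k + 1) * y ^ (n - k)) := by ring
      _ = _ := by rw [hchoose]; ring

variable {α β : Type*}

/-- `f a = inl a'` makes `a'` the parent of `a`; `f a = inr b` makes `a` a root labelled `b`. -/
def ParentRel (f : α → α ⊕ β) (a' a : α) : Prop := f a = Sum.inl a'

abbrev ParentMap (α β : Type*) := {f : α → α ⊕ β // WellFounded (ParentRel f)}

namespace ParentMap

section Decomposition

def roots [Fintype α] (f : α → α ⊕ β) : Finset α := {a | (f a).isRight}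

lemma isRight_iff_mem_roots [Fintype α] {f : α → α ⊕ β} {S : Finset α} (hf : roots f = S)
    (a : α) : (f a).isRight ↔ a ∈ S := by
  simp [← hf, roots]

variable [DecidableEq α] (S : Finset α)

abbrev splitEquiv : {a // a ∉ S} ⊕ S ≃ α :=
  (Equiv.sumComm _ _).trans (Equiv.sumCompl (· ∈ S))

lemma wellFounded_parentRel_iff {f : α → α ⊕ β} (hS : ∀ a ∈ S, (f a).isRight)
    {g : {a // a ∉ S} → {a // a ∉ S} ⊕ S}
    (hfg : ∀ x : {a // a ∉ S}, f x = .inl (splitEquiv S (g x))) :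
    WellFounded (ParentRel f) ↔ WellFounded (ParentRel g) := by
  have hrel (x x' : {a // a ∉ S}) : ParentRel g x' x ↔ ParentRel f x' x := by
    simp only [ParentRel, hfg, Sum.inl.injEq, ← (splitEquiv S).apply_eq_iff_eq]
    rfl
  refine ⟨fun hf => Subrelation.wf (hrel _ _).mp (InvImage.wf Subtype.val hf), fun hg => ?_⟩
  have hroot (a : α) (ha : a ∈ S) : Acc (ParentRel f) a :=
    ⟨_, fun a' h => absurd (hS a ha) (by simp [show f a = .inl a' from h])⟩
  have hrest (x : {a // a ∉ S}) : Acc (ParentRel f) x := by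
    induction hg.apply x with
    | intro x _ ih =>
      refine ⟨_, fun a' h => ?_⟩
      rw [ParentRel, hfg] at h
      rcases hx : g x with x' | s <;> rw [hx] at h <;> cases h
      · exact ih x' hx
      · exact hroot s s.2
  exact ⟨fun a => if ha : a ∈ S then hroot a ha else hrest ⟨a, ha⟩⟩

def graft (h : S → β) (g : {a // a ∉ S} → {a // a ∉ S} ⊕ S) (a : α) : α ⊕ β :=
  if ha : a ∈ S then .inr (h ⟨a, ha⟩) else .inl (splitEquiv S (g ⟨a, ha⟩))

section Graft

variable {S} (h : S → β) (g : {a // a ∉ S} → {a // a ∉ S} ⊕ S)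

lemma graft_of_mem (s : S) : graft S h g s = .inr (h s) := dif_pos s.2

lemma graft_of_notMem (x : {a // a ∉ S}) : graft S h g x = .inl (splitEquiv S (g x)) :=
  dif_neg x.2

lemma roots_graft [Fintype α] : roots (graft S h g) = S := by
  ext a
  by_cases ha : a ∈ S
  · simp [roots, ha, graft_of_mem h g ⟨a, ha⟩]
  · simp [roots, ha, graft_of_notMem h g ⟨a, ha⟩]

end Graft

variable [Fintype α]

def rootsEquiv :
    {f : ParentMap α β // roots f.1 = S} ≃ (S → β) × ParentMap {a // a ∉ S} S where
  toFun f :=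
    (fun s => (f.1.1 s).getRight ((isRight_iff_mem_roots f.2 s).2 s.2),
     ⟨fun x => (splitEquiv S).symm ((f.1.1 x).getLeft
        (by simpa [← Sum.not_isRight, isRight_iff_mem_roots f.2] using x.2)),
      (wellFounded_parentRel_iff S (fun a => (isRight_iff_mem_roots f.2 a).2) (by simp)).1 f.1.2⟩)
  invFun p :=
    ⟨⟨graft S p.1 p.2.1,
      (wellFounded_parentRel_iff S (fun a => (isRight_iff_mem_roots (roots_graft _ _) a).2)
        (graft_of_notMem _ _)).2 p.2.2⟩,
      roots_graft p.1 p.2.1⟩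
  left_inv f := by
    refine Subtype.ext (Subtype.ext (funext fun a => ?_))
    change graft S _ _ a = f.1.1 a
    by_cases ha : a ∈ S
    · rw [graft_of_mem _ _ ⟨a, ha⟩]
      exact (Sum.eq_right_iff_getRight_eq.2 ⟨_, rfl⟩).symm
    · rw [graft_of_notMem _ _ ⟨a, ha⟩, Equiv.apply_symm_apply]
      exact (Sum.eq_left_iff_getLeft_eq.2 ⟨_, rfl⟩).symm
  right_inv p := by
    refine Prod.ext (funext fun s => ?_) (Subtype.ext (funext fun x => ?_))
    · simp [graft_of_mem]
    · simp [graft_of_notMem]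

def equivSigmaRoots :
    ParentMap α β ≃ Σ S : Finset α, (S → β) × ParentMap {a // a ∉ S} S :=
  (Equiv.sigmaFiberEquiv fun f : ParentMap α β => roots f.1).symm.trans
    (Equiv.sigmaCongrRight fun S => rootsEquiv S)

lemma card_eq_sum [Finite β] :
    Nat.card (ParentMap α β) =
      ∑ S : Finset α, Nat.card β ^ #S * Nat.card (ParentMap {a // a ∉ S} S) := by
  rw [Nat.card_congr equivSigmaRoots, Nat.card_sigma]
  refine sum_congr rfl fun S _ => ?_
  rw [Nat.card_prod, Nat.card_fun, Nat.card_eq_fintype_card (α := S), Fintype.card_coe]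

end Decomposition

instance [IsEmpty α] : Unique (ParentMap α β) where
  default := ⟨isEmptyElim, wellFounded_of_isEmpty _⟩
  uniq _ := Subtype.ext (funext isEmptyElim)

instance [Nonempty α] [IsEmpty β] : IsEmpty (ParentMap α β) := by
  refine ⟨fun ⟨f, hf⟩ => ?_⟩
  obtain ⟨a, -, ha⟩ := hf.has_min Set.univ Set.univ_nonempty
  rcases h : f a with a' | b
  · exact ha a' trivial h
  · exact isEmptyElim b

end ParentMap

/-- Stated multiplied by `n + m` so that it also holds for `n = 0`, where `F(0, m) = 1`. -/
theorem card_parentMap (α β : Type u) [Finite α] [Finite β] :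
    (Nat.card α + Nat.card β) * Nat.card (ParentMap α β) =
      Nat.card β * (Nat.card α + Nat.card β) ^ Nat.card α := by
  induction hn : Nat.card α using Nat.strong_induction_on generalizing α β with
  | _ n ih =>
  classical
  have := Fintype.ofFinite α
  obtain rfl | hn0 := n.eq_zero_or_pos
  · have : IsEmpty α := Finite.card_eq_zero_iff.1 hn
    simp
  set m := Nat.card β
  have hcard (S : Finset α) : Nat.card {a // a ∉ S} = n - #S := by
    rw [Nat.card_eq_fintype_card, Fintype.card_subtype_compl, Fintype.card_coe, ← hn,
      Nat.card_eq_fintype_card]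
  have hterm (S : Finset α) : n * (m ^ #S * Nat.card (ParentMap {a // a ∉ S} S)) =
      #S * m ^ #S * n ^ (n - #S) := by
    obtain rfl | hSne := S.eq_empty_or_nonempty
    · obtain ⟨a⟩ := Finite.card_pos_iff.1 (hn ▸ hn0 : 0 < Nat.card α)
      have : Nonempty {a // a ∉ (∅ : Finset α)} := ⟨⟨a, notMem_empty a⟩⟩
      rw [Nat.card_of_isEmpty]
      simp
    have hS : #S ≤ n := hn ▸ Nat.card_eq_fintype_card (α := α) ▸ S.card_le_univ
    have := ih _ (by have := hSne.card_pos; omega) {a // a ∉ S} S (hcard S)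
    rw [Nat.card_eq_fintype_card (α := S), Fintype.card_coe, Nat.sub_add_cancel hS] at this
    rw [mul_left_comm, this]
    ring
  apply Nat.eq_of_mul_eq_mul_left hn0
  calc n * ((n + m) * Nat.card (ParentMap α β))
      = (n + m) * ∑ S : Finset α, #S * m ^ #S * n ^ (n - #S) := by
        rw [mul_left_comm, ParentMap.card_eq_sum, mul_sum]
        exact congrArg _ (sum_congr rfl fun S _ => hterm S)
    _ = (n + m) * (n * m * (m + n) ^ (n - 1)) := by
        have := sum_powerset_card_mul_pow_mul_pow m n (univ : Finset α)
        rw [powerset_univ, card_univ, ← Nat.card_eq_fintype_card, hn] at this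
        exact congrArg _ (by exact_mod_cast this)
    _ = n * (m * (n + m) ^ n) := by
        obtain ⟨k, rfl⟩ := Nat.exists_eq_add_one_of_ne_zero hn0.ne'
        rw [Nat.add_sub_cancel, pow_succ]
        ring

namespace ParentMap

variable {V : Type*} (f : ParentMap V β)

def graph : SimpleGraph V := fromRel (ParentRel f.1)

lemma graph_adj {v w : V} :
    f.graph.Adj v w ↔ v ≠ w ∧ (f.1 w = .inl v ∨ f.1 v = .inl w) := fromRel_adj _ _ _

noncomputable def rank (v : V) : Ordinal := (f.2.apply v).rank

noncomputable def root : V → V :=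
  f.2.fix fun v ih => match h : f.1 v with
    | .inl w => ih w h
    | .inr _ => v

variable {f}

lemma rank_lt_of_eq_inl {v w : V} (h : f.1 v = .inl w) : f.rank w < f.rank v :=
  Acc.rank_lt_of_rel (f.2.apply v) h

lemma graph_adj_of_eq_inl {v w : V} (h : f.1 v = .inl w) : f.graph.Adj v w := by
  refine f.graph_adj.2 ⟨?_, .inr h⟩
  rintro rfl
  exact (rank_lt_of_eq_inl h).false

lemma root_of_eq_inl {v w : V} (h : f.1 v = .inl w) : f.root v = f.root w := by
  rw [root, WellFounded.fix_eq]
  split <;> rename_i h' <;> rw [h] at h' <;> cases h'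
  rfl

lemma root_of_eq_inr {v : V} {b : β} (h : f.1 v = .inr b) : f.root v = v := by
  rw [root, WellFounded.fix_eq]
  split <;> simp_all

lemma exists_root_eq_inr (v : V) : ∃ b, f.1 (f.root v) = .inr b := by
  induction v using f.2.induction with
  | _ v ih =>
    rcases h : f.1 v with w | b
    · rw [root_of_eq_inl h]; exact ih w h
    · rw [root_of_eq_inr h]; exact ⟨b, h⟩

lemma root_eq_of_adj {v w : V} (h : f.graph.Adj v w) : f.root v = f.root w := by
  rcases f.graph_adj.1 h with ⟨-, h | h⟩
  · exact (root_of_eq_inl h).symm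
  · exact root_of_eq_inl h

lemma root_eq_of_reachable {v w : V} (h : f.graph.Reachable v w) : f.root v = f.root w := by
  obtain ⟨p⟩ := h
  induction p with
  | nil => rfl
  | cons hadj _ ih => exact (root_eq_of_adj hadj).trans ih

lemma isAcyclic_graph : f.graph.IsAcyclic := by
  classical
  intro v c hc
  -- a vertex of maximal rank on the cycle would have both cycle neighbours as its parent
  obtain ⟨x, hx, hmax⟩ := c.support.toFinset.exists_max_image f.rank ⟨v, by simp⟩
  simp only [List.mem_toFinset] at hx hmax
  have hc' := hc.rotate hx
  have hparent : ∀ y ∈ (c.rotate x hx).support, f.graph.Adj x y → f.1 x = .inl y := by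
    intro y hy hxy
    rcases (f.graph_adj.1 hxy).2 with h | h
    · exact absurd (hmax y ((c.mem_support_rotate_iff ..).1 hy)) (rank_lt_of_eq_inl h).not_ge
    · exact h
  have h1 := hparent _ (Walk.getVert_mem_support _ 1) (Walk.adj_snd hc'.not_nil)
  have h2 := hparent _ (Walk.getVert_mem_support _ _) (Walk.adj_penultimate hc'.not_nil).symm
  exact hc'.snd_ne_penultimate (Sum.inl.inj (h1.symm.trans h2))

lemma reachable_root (v : V) : f.graph.Reachable v (f.root v) := by
  induction v using f.2.induction with
  | _ v ih =>
    rcases h : f.1 v with w | b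
    · rw [root_of_eq_inl h]
      exact (graph_adj_of_eq_inl h).reachable.trans (ih w h)
    · rw [root_of_eq_inr h]

lemma exists_isPath_root (v : V) : ∃ p : f.graph.Walk v (f.root v), p.IsPath ∧
    (∀ z ∈ p.support, f.rank z ≤ f.rank v) ∧ ∀ w, f.1 v = .inl w → p.snd = w := by
  induction v using f.2.induction with
  | _ v ih =>
    rcases h : f.1 v with w | b
    · obtain ⟨p, hp, hrank, -⟩ := ih w h
      have hlt := rank_lt_of_eq_inl h
      refine ⟨.cons (graph_adj_of_eq_inl h) (p.copy rfl (root_of_eq_inl h).symm), ?_, ?_, ?_⟩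
      · exact (by simpa using hp : (p.copy rfl _).IsPath).cons fun hv =>
          (hrank v (by simpa using hv)).not_gt hlt
      · simp only [Walk.support_cons, Walk.support_copy, List.mem_cons, forall_eq_or_imp, le_rfl,
          true_and]
        exact fun z hz => (hrank z hz).trans hlt.le
      · simp
    · exact ⟨(Walk.nil : f.graph.Walk v v).copy rfl (root_of_eq_inr h).symm,
        by simp, by simp, by simp⟩

end ParentMap

@[ext]
structure RootedForestOn (V : Type*) where
  graph : SimpleGraph V
  root : V → V
  isAcyclic : graph.IsAcyclic
  root_eq_of_reachable {v w : V} : graph.Reachable v w → root v = root w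
  reachable_root (v : V) : graph.Reachable v (root v)

namespace RootedForestOn

variable {V : Type*} [DecidableEq V] (F : RootedForestOn V)

noncomputable def pathToRoot (v : V) : F.graph.Path v (F.root v) :=
  (F.reachable_root v).some.toPath

noncomputable def parent (v : V) : V ⊕ Unit :=
  if v = F.root v then .inr () else .inl (F.pathToRoot v).1.snd

variable {F}

lemma eq_pathToRoot {v : V} {p : F.graph.Walk v (F.root v)} (hp : p.IsPath) :
    p = F.pathToRoot v :=
  congrArg Subtype.val ((F.isAcyclic.subsingleton_path _ _).elim ⟨p, hp⟩ _)

lemma parent_eq_snd {v : V} (hv : v ≠ F.root v) {p : F.graph.Walk v (F.root v)} (hp : p.IsPath) :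
    F.parent v = .inl p.snd := by
  rw [parent, if_neg hv, ← eq_pathToRoot hp]

lemma adj_of_parent_eq_inl {v w : V} (h : F.parent v = .inl w) : F.graph.Adj v w := by
  unfold parent at h
  split_ifs at h with hv
  cases h
  exact Walk.adj_snd (Walk.not_nil_of_ne hv)

lemma length_pathToRoot_lt {v w : V} (h : F.parent v = .inl w) :
    (F.pathToRoot w).1.length < (F.pathToRoot v).1.length := by
  have hw := F.root_eq_of_reachable (adj_of_parent_eq_inl h).reachable
  unfold parent at h
  split_ifs at h with hv
  cases h
  set p := (F.pathToRoot v).1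
  have hp : ¬ p.Nil := Walk.not_nil_of_ne hv
  have htail : (p.tail.copy rfl hw).IsPath := by simpa using (F.pathToRoot v).2.tail
  rw [← eq_pathToRoot htail, Walk.length_copy, ← p.length_tail_add_one hp]
  exact Nat.lt_succ_self _

lemma wellFounded_parentRel : WellFounded (ParentRel F.parent) :=
  Subrelation.wf length_pathToRoot_lt (measure fun v => (F.pathToRoot v).1.length).wf

lemma parent_eq_inl_or_of_adj {v w : V} (h : F.graph.Adj v w) :
    F.parent v = .inl w ∨ F.parent w = .inl v := by
  have hroot := F.root_eq_of_reachable h.reachable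
  set p := (F.pathToRoot v).1
  by_cases hw : w ∈ p.support
  · left
    have hv : v ≠ F.root v := by
      intro hv
      rw [Walk.nil_iff_support_eq.1 ((F.pathToRoot v).2.nil_iff_eq.2 hv), List.mem_singleton] at hw
      exact h.ne hw.symm
    rw [parent_eq_snd hv (F.pathToRoot v).2,
      F.isAcyclic.eq_snd_of_adj_start (F.pathToRoot v).2 h hw]
  · right
    have hp : (Walk.cons h.symm p).IsPath := (F.pathToRoot v).2.cons hw
    have hw' : w ≠ F.root w := fun hw' => hw (by rw [hw', ← hroot]; exact p.end_mem_support)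
    rw [parent_eq_snd hw' (by simpa using hp : ((Walk.cons h.symm p).copy rfl hroot).IsPath)]
    simp

variable (F) in
noncomputable def toParentMap : ParentMap V Unit := ⟨F.parent, wellFounded_parentRel⟩

lemma graph_toParentMap : F.toParentMap.graph = F.graph := by
  ext v w
  rw [ParentMap.graph_adj]
  constructor
  · rintro ⟨-, h | h⟩
    · exact (adj_of_parent_eq_inl h).symm
    · exact adj_of_parent_eq_inl h
  · exact fun h => ⟨h.ne, (parent_eq_inl_or_of_adj h).symm⟩

lemma root_toParentMap : F.toParentMap.root = F.root := by
  funext v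
  induction v using F.toParentMap.2.induction with
  | _ v ih =>
    rcases h : F.parent v with w | _
    · rw [ParentMap.root_of_eq_inl h, ih w h,
        F.root_eq_of_reachable (adj_of_parent_eq_inl h).reachable]
    · rw [ParentMap.root_of_eq_inr h]
      by_contra hv
      simp [parent, hv] at h

end RootedForestOn

namespace ParentMap

variable {V : Type*}

noncomputable def toRootedForestOn (f : ParentMap V β) : RootedForestOn V :=
  ⟨f.graph, f.root, isAcyclic_graph, root_eq_of_reachable, reachable_root⟩

lemma parent_toRootedForestOn [DecidableEq V] (f : ParentMap V Unit) :
    f.toRootedForestOn.parent = f.1 := by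
  funext v
  rcases h : f.1 v with w | _
  · obtain ⟨p, hp, -, hsnd⟩ := exists_isPath_root v
    have hv : v ≠ f.root v := fun hv => by
      obtain ⟨b, hb⟩ := exists_root_eq_inr (f := f) v
      rw [← hv, h] at hb
      cases hb
    exact (RootedForestOn.parent_eq_snd (F := f.toRootedForestOn) hv hp).trans
      (congrArg Sum.inl (hsnd w h))
  · exact if_pos (root_of_eq_inr h).symm

end ParentMap

noncomputable def RootedForestOn.equivParentMap {V : Type*} [DecidableEq V] :
    RootedForestOn V ≃ ParentMap V Unit where
  toFun := RootedForestOn.toParentMap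
  invFun := ParentMap.toRootedForestOn
  left_inv _ := RootedForestOn.ext RootedForestOn.graph_toParentMap RootedForestOn.root_toParentMap
  right_inv f := Subtype.ext f.parent_toRootedForestOn

def rootedForestEquiv (n : ℕ) : RootedForest n ≃ RootedForestOn (Fin n) where
  toFun F := ⟨F.1.1, fun v => F.2.1 (F.1.1.connectedComponentMk v), F.1.2,
    fun h => congrArg F.2.1 (ConnectedComponent.sound h),
    fun v => ConnectedComponent.exact (F.2.2 _).symm⟩
  invFun F := ⟨⟨F.graph, F.isAcyclic⟩,
    ⟨ConnectedComponent.lift F.root fun _ _ p _ => F.root_eq_of_reachable p.reachable,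
      ConnectedComponent.ind fun v => ConnectedComponent.sound (F.reachable_root v).symm⟩⟩
  left_inv F := by
    obtain ⟨G, r, hr⟩ := F
    refine congrArg (Sigma.mk G) (Subtype.ext (funext fun c => ?_))
    induction c using ConnectedComponent.ind
    rfl
  right_inv _ := rfl

/-- The number of forests of rooted trees on `{1,…,n}` is `(n+1)^(n-1)`. -/
theorem card_rootedForests (n : ℕ) :
    Nat.card (RootedForest n) = (n + 1) ^ (n - 1) := by
  have h := card_parentMap (Fin n) Unit
  rw [Nat.card_unique (α := Unit), Nat.card_fin, one_mul,
    ← Nat.card_congr ((rootedForestEquiv n).trans RootedForestOn.equivParentMap)] at h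
  apply Nat.eq_of_mul_eq_mul_left n.succ_pos
  rw [h]
  cases n <;> simp [pow_succ']
end

section
/- The number of labeled trees on vertex set {0,1,...,n} (equivalently on n+1 vertices) equals (n+1)^{n-1}. -/
/-!
A tree on `V` rooted at `r` is the same thing as a map `f : V → V` whose iterates carry every
vertex to the fixed point `r`: send each vertex to its neighbour on the way to `r`. Such maps are
counted with Joyal's bijection. List the periodic points of an arbitrary `g : V → V` in increasing
order, `c₁ < ⋯ < cₘ`; replacing the permutation `cᵢ ↦ g cᵢ` by the path
`g c₁ → g c₂ → ⋯ → g cₘ` (with `g cₘ` fixed) turns `g` into a rooted map with a marked vertex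
`g c₁`, and every rooted map with a marked vertex arises exactly once: read off the path from the
mark to the root. Conjugating by a transposition, the number of rooted maps does not depend on the
root, so `|V| ^ |V| = |V| · |V| · #{maps rooted at r}`.
-/

open Function

variable {V : Type*}

lemma Function.exists_iterate_iterate_eq_of_mem_periodicPts {f : V → V} {v : V}
    (hv : v ∈ periodicPts f) (m : ℕ) : ∃ j, f^[j] (f^[m] v) = v := by
  obtain ⟨n, hn, hnv⟩ := mem_periodicPts.1 hv
  refine ⟨n * m - m, ?_⟩
  rw [← iterate_add_apply, Nat.sub_add_cancel (Nat.le_mul_of_pos_left m hn), (hnv.mul_const m).eq]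

lemma Function.exists_iterate_mem_periodicPts_s6 [Finite V] (f : V → V) (v : V) :
    ∃ k, f^[k] v ∈ periodicPts f := by
  obtain ⟨m, n, heq, hne⟩ : ∃ m n, f^[m] v = f^[n] v ∧ m ≠ n := by
    simpa [Injective] using not_injective_infinite_finite (f^[·] v)
  wlog hmn : m < n generalizing m n
  · exact this n m heq.symm hne.symm (by omega)
  refine ⟨m, mk_mem_periodicPts (n := n - m) (by omega) ?_⟩
  rw [IsPeriodicPt, IsFixedPt, ← iterate_add_apply, Nat.sub_add_cancel hmn.le, heq]

structure RootedAt (f : V → V) (r : V) : Prop where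
  apply_root : f r = r
  exists_iterate_eq : ∀ v, ∃ k, f^[k] v = r

namespace RootedAt

variable {f : V → V} {r : V}

lemma eq_of_mem_periodicPts (hf : RootedAt f r) {v : V} (hv : v ∈ periodicPts f) : v = r := by
  obtain ⟨m, hm⟩ := hf.exists_iterate_eq v
  obtain ⟨j, hj⟩ := exists_iterate_iterate_eq_of_mem_periodicPts hv m
  rw [← hj, hm, iterate_fixed hf.apply_root]

lemma eq_of_isFixedPt (hf : RootedAt f r) {v : V} (hv : IsFixedPt f v) : v = r :=
  hf.eq_of_mem_periodicPts (mk_mem_periodicPts one_pos hv)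

lemma unique (hf : RootedAt f r) {r' : V} (hf' : RootedAt f r') : r = r' :=
  hf'.eq_of_isFixedPt hf.apply_root

lemma apply_ne (hf : RootedAt f r) {v : V} (hv : v ≠ r) : f v ≠ v :=
  mt hf.eq_of_isFixedPt hv

lemma conj {W : Type*} (hf : RootedAt f r) (e : V ≃ W) : RootedAt (e.conj f) (e r) := by
  have hiter (k : ℕ) (v : V) : (e.conj f)^[k] (e v) = e (f^[k] v) :=
    ((Semiconj.iterate_right (fun _ ↦ by simp) k : Semiconj e f^[k] (e.conj f)^[k]) v).symm
  refine ⟨by simp [hf.apply_root], e.surjective.forall.2 fun v ↦ ?_⟩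
  obtain ⟨k, hk⟩ := hf.exists_iterate_eq v
  exact ⟨k, by rw [hiter, hk]⟩

end RootedAt

lemma rootedAt_conj_iff {W : Type*} {f : V → V} {r : W} (e : V ≃ W) :
    RootedAt (e.conj f) r ↔ RootedAt f (e.symm r) := by
  refine ⟨fun hf ↦ ?_, fun hf ↦ by simpa using hf.conj e⟩
  simpa [← Equiv.conj_symm] using hf.conj e.symm

def rootedAtEquiv [DecidableEq V] (a b : V) :
    {f : V → V // RootedAt f a} ≃ {f : V → V // RootedAt f b} :=
  (Equiv.swap a b).conj.subtypeEquiv fun f ↦ by simp [rootedAt_conj_iff]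

noncomputable def sigmaRootedAtEquiv :
    {f : V → V // ∃ r, RootedAt f r} ≃ Σ r, {f : V → V // RootedAt f r} where
  toFun f := ⟨f.2.choose, f.1, f.2.choose_spec⟩
  invFun p := ⟨p.2, p.1, p.2.2⟩
  left_inv _ := rfl
  right_inv p := Sigma.subtype_ext (RootedAt.unique (Exists.choose_spec _) p.2.2) rfl

lemma card_exists_rootedAt (r : V) :
    Nat.card {f : V → V // ∃ a, RootedAt f a} =
      Nat.card V * Nat.card {f : V → V // RootedAt f r} := by
  classical
  rw [Nat.card_congr (sigmaRootedAtEquiv.trans (Equiv.sigmaEquivProdOfEquiv (rootedAtEquiv · r))),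
    Nat.card_prod]

namespace SimpleGraph

def funGraph (f : V → V) : SimpleGraph V := fromRel fun u v ↦ f u = v

variable {f : V → V} {r : V}

lemma funGraph_adj {u v : V} : (funGraph f).Adj u v ↔ u ≠ v ∧ (f u = v ∨ f v = u) :=
  fromRel_adj _ u v

lemma funGraph_adj_apply {v : V} (hv : f v ≠ v) : (funGraph f).Adj v (f v) :=
  funGraph_adj.2 ⟨hv.symm, .inl rfl⟩

lemma Connected.exists_adj_dist_add_one {G : SimpleGraph V} (hG : G.Connected) {v : V}
    (hv : v ≠ r) : ∃ w, G.Adj v w ∧ G.dist w r + 1 = G.dist v r := by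
  obtain ⟨p, -, hp⟩ := hG.exists_path_of_dist v r
  obtain ⟨w, hvw, q, rfl⟩ := Walk.exists_eq_cons_of_ne hv p
  refine ⟨w, hvw, le_antisymm ?_ ?_⟩
  · have := dist_le q
    rw [Walk.length_cons] at hp
    omega
  · have := hG.dist_triangle (u := v) (v := w) (w := r)
    rw [dist_eq_one_iff_adj.2 hvw] at this
    omega

end SimpleGraph

namespace RootedAt

open SimpleGraph

variable {f : V → V} {r : V}

lemma connected_funGraph (hf : RootedAt f r) : (funGraph f).Connected := by
  refine (connected_iff_exists_forall_reachable _).2 ⟨r, fun v ↦ ?_⟩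
  obtain ⟨k, hk⟩ := hf.exists_iterate_eq v
  induction k generalizing v with
  | zero => exact hk ▸ .rfl
  | succ k ih =>
    rcases eq_or_ne (f v) v with hfix | hfix
    · exact ih v (by rwa [iterate_succ_apply, hfix] at hk)
    · exact (ih (f v) hk).trans (funGraph_adj_apply hfix).reachable.symm

lemma edgeSet_funGraph (hf : RootedAt f r) :
    (funGraph f).edgeSet = (fun v ↦ s(v, f v)) '' {v | v ≠ r} := by
  ext e
  induction e using Sym2.ind with
  | h u v =>
    simp only [mem_edgeSet, funGraph_adj, Set.mem_image, Set.mem_ofPred_eq, Sym2.eq_iff]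
    constructor
    · rintro ⟨huv, rfl | rfl⟩
      · exact ⟨u, fun hu ↦ huv (hu ▸ hf.apply_root.symm), .inl ⟨rfl, rfl⟩⟩
      · exact ⟨v, fun hv ↦ huv (hv ▸ hf.apply_root), .inr ⟨rfl, rfl⟩⟩
    · rintro ⟨w, hw, ⟨rfl, rfl⟩ | ⟨rfl, rfl⟩⟩
      · exact ⟨(hf.apply_ne hw).symm, .inl rfl⟩
      · exact ⟨hf.apply_ne hw, .inr rfl⟩

lemma isTree_funGraph [Finite V] (hf : RootedAt f r) : (funGraph f).IsTree := by
  have hinj : Set.InjOn (fun v ↦ s(v, f v)) {v | v ≠ r} := by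
    intro v hv w hw hvw
    rcases Sym2.eq_iff.1 hvw with ⟨h, -⟩ | ⟨hvfw, hfvw⟩
    · exact h
    · exact absurd (hf.eq_of_mem_periodicPts (mk_mem_periodicPts two_pos
        (show f (f v) = v by rw [hfvw, hvfw]))) hv
  refine isTree_iff_connected_and_card.2 ⟨hf.connected_funGraph, ?_⟩
  rw [Nat.card_coe_set_eq, hf.edgeSet_funGraph, hinj.ncard_image, ← Set.ncard_univ,
    ← Set.ncard_sdiff_singleton_add_one (Set.mem_univ r)]
  congr 2
  ext
  simp

lemma dist_funGraph_apply (hf : RootedAt f r) {v : V} (hv : v ≠ r) :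
    (funGraph f).dist (f v) r + 1 = (funGraph f).dist v r := by
  induction hd : (funGraph f).dist v r using Nat.strong_induction_on generalizing v with
  | _ d ih =>
  obtain ⟨w, hvw, hw⟩ := hf.connected_funGraph.exists_adj_dist_add_one hv
  rcases (funGraph_adj.1 hvw).2 with rfl | hwv
  · rw [hw, hd]
  · have hwr : w ≠ r := by rintro rfl; exact hv (hwv ▸ hf.apply_root)
    have := ih _ (by omega) hwr rfl
    rw [hwv] at this
    omega

lemma funGraph_injective {g : V → V} (hf : RootedAt f r) (hg : RootedAt g r)
    (hfg : funGraph f = funGraph g) : f = g := by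
  by_contra hne
  obtain ⟨v, hv⟩ := Function.ne_iff.1 hne
  have hvr : v ≠ r := by rintro rfl; exact hv (hf.apply_root.trans hg.apply_root.symm)
  have hadj : (funGraph f).Adj v (g v) := hfg ▸ funGraph_adj_apply (hg.apply_ne hvr)
  obtain hgv | hfgv := (funGraph_adj.1 hadj).2
  · exact hv hgv
  -- `g` steps from `v` towards `r` in the common graph, so `f (g v) = v` would step away.
  have hgvr : g v ≠ r := by rintro h; rw [h, hf.apply_root] at hfgv; exact hvr hfgv.symm
  have h1 := hf.dist_funGraph_apply hgvr
  have h2 := hg.dist_funGraph_apply hvr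
  rw [hfgv, hfg] at h1
  omega

end RootedAt

namespace SimpleGraph

lemma IsTree.exists_rootedAt_funGraph_eq {G : SimpleGraph V} (hG : G.IsTree) (r : V) :
    ∃ f, RootedAt f r ∧ funGraph f = G := by
  classical
  have hparent : ∀ v, ∃ w, v ≠ r → G.Adj v w ∧ G.dist w r + 1 = G.dist v r := fun v ↦
    if hv : v = r then ⟨r, fun h ↦ absurd hv h⟩
    else (hG.connected.exists_adj_dist_add_one hv).imp fun _ h _ ↦ h
  choose p hp using hparent
  set f := Function.update p r r with hfdef
  have hf_of_ne {v : V} (hv : v ≠ r) : G.Adj v (f v) ∧ G.dist (f v) r + 1 = G.dist v r := by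
    rw [hfdef, Function.update_of_ne hv]; exact hp v hv
  have hf : RootedAt f r := by
    refine ⟨Function.update_self .., fun v ↦ ?_⟩
    induction hd : G.dist v r using Nat.strong_induction_on generalizing v with
    | _ d ih =>
    rcases eq_or_ne v r with rfl | hv
    · exact ⟨0, rfl⟩
    · obtain ⟨k, hk⟩ := ih _ (by have := (hf_of_ne hv).2; omega) (f v) rfl
      exact ⟨k + 1, hk⟩
  refine ⟨f, hf, (isTree_iff_minimal_connected.1 hG).eq_of_le hf.connected_funGraph ?_⟩
  intro u v huv
  obtain ⟨hne, rfl | rfl⟩ := funGraph_adj.1 huv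
  · exact (hf_of_ne fun h ↦ hne (by rw [h, hf.apply_root])).1
  · exact (hf_of_ne fun h ↦ hne (by rw [h, hf.apply_root])).1.symm

theorem card_isTree_eq_card_rootedAt [Finite V] (r : V) :
    Nat.card {G : SimpleGraph V // G.IsTree} = Nat.card {f : V → V // RootedAt f r} := by
  refine (Nat.card_congr (Equiv.ofBijective (fun f ↦ ⟨funGraph f.1, f.2.isTree_funGraph⟩)
    ⟨fun f g h ↦ ?_, fun G ↦ ?_⟩)).symm
  · exact Subtype.ext (f.2.funGraph_injective g.2 (congrArg Subtype.val h))
  · obtain ⟨f, hf, hG⟩ := G.2.exists_rootedAt_funGraph_eq r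
    exact ⟨⟨f, hf⟩, Subtype.ext hG⟩

end SimpleGraph

section Relink

variable [DecidableEq V] {S L : List V} {f : V → V} {v : V}

/-- Sends `S[i]` to `L[i]`, and to itself when `L` is too short: `relink L L.tail f` walks along
`L` and stops at its last entry. -/
def relink (S L : List V) (f : V → V) (v : V) : V :=
  if v ∈ S then L.getD (S.idxOf v) v else f v

lemma relink_of_mem (hv : v ∈ S) : relink S L f v = L.getD (S.idxOf v) v := if_pos hv

lemma relink_of_not_mem (hv : v ∉ S) : relink S L f v = f v := if_neg hv

lemma relink_getElem (hS : S.Nodup) {i : ℕ} (hi : i < S.length) :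
    relink S L f S[i] = L.getD i S[i] := by
  rw [relink_of_mem (S.getElem_mem hi), hS.idxOf_getElem]

lemma relink_relink {S' L' : List V} (h : ∀ v, v ∈ S' ↔ v ∈ S) :
    relink S L (relink S' L' f) = relink S L f := by
  funext v
  by_cases hv : v ∈ S
  · simp only [relink_of_mem hv]
  · rw [relink_of_not_mem hv, relink_of_not_mem hv, relink_of_not_mem ((h v).not.2 hv)]

lemma relink_map_self (S : List V) (f : V → V) : relink S (S.map f) f = f := by
  funext v
  by_cases hv : v ∈ S
  · have hi : S.idxOf v < S.length := List.idxOf_lt_length_of_mem hv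
    rw [relink_of_mem hv, List.getD_eq_getElem _ _ (by simpa using hi), List.getElem_map,
      List.getElem_idxOf]
  · exact relink_of_not_mem hv

lemma map_relink (hS : S.Nodup) (hlen : S.length = L.length) : S.map (relink S L f) = L := by
  refine List.ext_getElem (by simp [hlen]) fun i h _ ↦ ?_
  rw [List.getElem_map, relink_getElem hS (by simpa using h), List.getD_eq_getElem]

lemma exists_iterate_relink_mem (h : ∀ v, ∃ k, f^[k] v ∈ S) (v : V) :
    ∃ k, (relink S L f)^[k] v ∈ S := by
  obtain ⟨k, hk⟩ := h v
  induction k generalizing v with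
  | zero => exact ⟨0, hk⟩
  | succ k ih =>
    by_cases hv : v ∈ S
    · exact ⟨0, hv⟩
    · obtain ⟨j, hj⟩ := ih (f v) hk
      exact ⟨j + 1, by rwa [iterate_succ_apply, relink_of_not_mem hv]⟩

end Relink

section Spine

noncomputable def spineLength (f : V → V) (b : V) : ℕ := sInf {k | IsFixedPt f (f^[k] b)}

noncomputable def spine (f : V → V) (b : V) : List V := List.iterate f b (spineLength f b + 1)

variable [DecidableEq V] {f : V → V} {L : List V}

lemma apply_getElem_of_relink_tail (hL : L.Nodup) (hf : relink L L.tail f = f) {i : ℕ}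
    (hi : i < L.length) : f L[i] = L.getD (i + 1) L[i] := by
  rw [← hf, relink_getElem hL hi]
  cases L <;> simp

lemma spine_eq_of_relink {b : V} {M : List V} (hL : (b :: M).Nodup)
    (hf : relink (b :: M) M f = f) :
    spine f b = b :: M := by
  have hstep {i : ℕ} (hi : i < M.length + 1) :
      f (b :: M)[i] = (b :: M).getD (i + 1) (b :: M)[i] :=
    apply_getElem_of_relink_tail hL hf hi
  have hiter (i : ℕ) (hi : i < M.length + 1) : (b :: M)[i] = f^[i] b := by
    induction i with
    | zero => rfl
    | succ i ih =>
      rw [iterate_succ_apply', ← ih (by omega), hstep (by omega),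
        List.getD_eq_getElem _ _ (by simpa using hi)]
  have hfix : IsFixedPt f (f^[M.length] b) := by
    rw [← hiter _ (by omega), IsFixedPt, hstep (by simp), List.getD_eq_default _ _ (by simp)]
  have hlen : spineLength f b = M.length := by
    refine le_antisymm (Nat.sInf_le hfix) (le_csInf ⟨_, hfix⟩ fun k hk ↦ ?_)
    by_contra! hkM
    have := hstep (i := k) (by omega)
    rw [List.getD_eq_getElem _ _ (by simpa using hkM), hiter k (by omega), hk,
      ← hiter k (by omega), hL.getElem_inj_iff] at this
    omega
  refine List.ext_getElem (by simp [spine, hlen]) fun i hi _ ↦ ?_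
  simp only [spine, List.getElem_iterate]
  exact (hiter i (by simpa [spine, hlen] using hi)).symm

lemma rootedAt_getLast_of_relink_tail (hL : L.Nodup) (hne : L ≠ [])
    (hf : relink L L.tail f = f) (hreach : ∀ v, ∃ k, f^[k] v ∈ L) :
    RootedAt f (L.getLast hne) := by
  have hpos : 0 < L.length := List.length_pos_iff.2 hne
  have hstep {i : ℕ} (hi : i + 1 < L.length) : f L[i] = L[i + 1] := by
    rw [apply_getElem_of_relink_tail hL hf (by omega), List.getD_eq_getElem]
  have hlast : f (L.getLast hne) = L.getLast hne := by
    rw [List.getLast_eq_getElem, apply_getElem_of_relink_tail hL hf (by omega),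
      List.getD_eq_default _ _ (by omega)]
  have hdescend (j : ℕ) : ∀ i (hi : i < L.length), i + j = L.length - 1 →
      f^[j] L[i] = L.getLast hne := by
    induction j with
    | zero => intro i hi hij; simp [List.getLast_eq_getElem, ← hij]
    | succ j ih =>
      intro i hi hij
      rw [iterate_succ_apply, hstep (by omega), ih (i + 1) (by omega) (by omega)]
  refine ⟨hlast, fun v ↦ ?_⟩
  obtain ⟨k, hk⟩ := hreach v
  obtain ⟨i, hi, hik⟩ := List.getElem_of_mem hk
  exact ⟨L.length - 1 - i + k, by rw [iterate_add_apply, ← hik, hdescend _ i hi (by omega)]⟩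

namespace RootedAt

variable {r : V}

omit [DecidableEq V] in
lemma iterate_spineLength (hf : RootedAt f r) (b : V) : f^[spineLength f b] b = r := by
  obtain ⟨k, hk⟩ := hf.exists_iterate_eq b
  exact hf.eq_of_isFixedPt (Nat.sInf_mem (s := {k | IsFixedPt f (f^[k] b)})
    ⟨k, by rw [Set.mem_ofPred_eq, hk]; exact hf.apply_root⟩)

omit [DecidableEq V] in
lemma iterate_ne_of_lt_of_le_spineLength (hf : RootedAt f r) {b : V} {i j : ℕ} (hij : i < j)
    (hj : j ≤ spineLength f b) : f^[i] b ≠ f^[j] b := by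
  intro h
  have hper : f^[i] b ∈ periodicPts f := mk_mem_periodicPts (n := j - i) (by omega) (by
    rw [IsPeriodicPt, IsFixedPt, ← iterate_add_apply, Nat.sub_add_cancel hij.le, h])
  have : spineLength f b ≤ i :=
    Nat.sInf_le (show IsFixedPt f (f^[i] b) by
      rw [hf.eq_of_mem_periodicPts hper]; exact hf.apply_root)
  omega

omit [DecidableEq V] in
lemma nodup_spine (hf : RootedAt f r) (b : V) : (spine f b).Nodup := by
  refine List.nodup_iff_injective_get.2 fun ⟨i, hi⟩ ⟨j, hj⟩ hij ↦ ?_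
  simp only [spine, List.length_iterate, List.get_eq_getElem, List.getElem_iterate] at hi hj hij
  rcases lt_trichotomy i j with h | rfl | h
  · exact absurd hij (hf.iterate_ne_of_lt_of_le_spineLength h (by omega))
  · rfl
  · exact absurd hij.symm (hf.iterate_ne_of_lt_of_le_spineLength h (by omega))

lemma relink_spine (hf : RootedAt f r) (b : V) : relink (spine f b) (spine f b).tail f = f := by
  funext v
  by_cases hv : v ∈ spine f b
  · obtain ⟨i, hi, rfl⟩ := List.getElem_of_mem hv
    rw [relink_getElem (hf.nodup_spine b) hi]
    simp only [spine, List.length_iterate, List.getElem_iterate] at hi ⊢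
    rcases lt_or_eq_of_le (Nat.lt_succ_iff.1 hi) with hlt | rfl
    · change (List.iterate f (f b) (spineLength f b)).getD i _ = _
      rw [List.getD_eq_getElem _ _ (by simpa using hlt), List.getElem_iterate,
        ← iterate_succ_apply, iterate_succ_apply']
    · rw [List.getD_eq_default _ _ (by simp), hf.iterate_spineLength, hf.apply_root]
  · exact relink_of_not_mem hv

omit [DecidableEq V] in
lemma mem_spine (hf : RootedAt f r) (b : V) : r ∈ spine f b := by
  simp only [spine, List.mem_iterate]
  exact ⟨_, Nat.lt_succ_self _, (hf.iterate_spineLength b).symm⟩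

end RootedAt

end Spine

section Cycles

variable [LinearOrder V] {g : V → V} {L : List V}

lemma periodicPts_eq_of_relink_sort (hL : L.Nodup) (hg : relink L.toFinset.sort L g = g)
    (hreach : ∀ v, ∃ k, g^[k] v ∈ L) : periodicPts g = {v | v ∈ L} := by
  set S := L.toFinset.sort
  have hmem (v : V) : v ∈ S ↔ v ∈ L := by simp [S]
  have hlen : S.length = L.length := by simp [S, List.toFinset_card_of_nodup hL]
  have happly {v : V} (hv : v ∈ L) :
      g v = L[S.idxOf v]'(hlen ▸ List.idxOf_lt_length_of_mem ((hmem v).2 hv)) := by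
    rw [← hg, relink_of_mem ((hmem v).2 hv), List.getD_eq_getElem]
  have hmaps : Set.MapsTo g {v | v ∈ L} {v | v ∈ L} := fun v hv ↦ by
    rw [Set.mem_ofPred_eq] at hv ⊢
    rw [happly hv]
    exact List.getElem_mem _
  have hinj : Set.InjOn g {v | v ∈ L} := fun v hv w hw hvw ↦ by
    rw [happly hv, happly hw, hL.getElem_inj_iff] at hvw
    exact (List.idxOf_inj ((hmem v).2 hv)).1 hvw
  have : Finite {v | v ∈ L} := (List.finite_toSet L).to_subtype
  ext v
  refine ⟨fun hv ↦ ?_, fun hv ↦ ?_⟩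
  · obtain ⟨k, hk⟩ := hreach v
    obtain ⟨j, hj⟩ := exists_iterate_iterate_eq_of_mem_periodicPts hv k
    exact hj ▸ hmaps.iterate j hk
  · exact Semiconj.mapsTo_periodicPts (g := Subtype.val) (fun _ ↦ rfl)
      ((hmaps.restrict_inj.2 hinj).mem_periodicPts ⟨v, hv⟩)

variable [Finite V]

noncomputable def cycleList (g : V → V) : List V :=
  ((Set.toFinite (periodicPts g)).toFinset.sort).map g

lemma mem_cycleList {v : V} : v ∈ cycleList g ↔ v ∈ periodicPts g := by
  simp only [cycleList, List.mem_map, Finset.mem_sort, Set.Finite.mem_toFinset]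
  rw [← Set.mem_image, (bijOn_periodicPts g).image_eq]

lemma nodup_cycleList (g : V → V) : (cycleList g).Nodup :=
  (Finset.sort_nodup _ _).map_on fun _ hx _ hy ↦ (bijOn_periodicPts g).injOn
    ((Set.Finite.mem_toFinset _).1 ((Finset.mem_sort _).1 hx))
    ((Set.Finite.mem_toFinset _).1 ((Finset.mem_sort _).1 hy))

lemma relink_cycleList (g : V → V) : relink (cycleList g).toFinset.sort (cycleList g) g = g := by
  have : (cycleList g).toFinset = (Set.toFinite (periodicPts g)).toFinset := by
    ext; simp [mem_cycleList]
  rw [this]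
  exact relink_map_self _ _

lemma exists_iterate_mem_cycleList (g : V → V) (v : V) : ∃ k, g^[k] v ∈ cycleList g := by
  simpa only [mem_cycleList] using exists_iterate_mem_periodicPts_s6 g v

lemma cycleList_ne_nil [Nonempty V] (g : V → V) : cycleList g ≠ [] := by
  obtain ⟨k, hk⟩ := exists_iterate_mem_cycleList g (Classical.arbitrary V)
  exact List.ne_nil_of_mem hk

lemma cycleList_eq (hL : L.Nodup) (hg : relink L.toFinset.sort L g = g)
    (hreach : ∀ v, ∃ k, g^[k] v ∈ L) : cycleList g = L := by
  have hP : (Set.toFinite (periodicPts g)).toFinset = L.toFinset := by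
    ext; simp [periodicPts_eq_of_relink_sort hL hg hreach]
  rw [cycleList, hP]
  conv_lhs => rw [← hg]
  exact map_relink (Finset.sort_nodup _ _) (by simp [List.toFinset_card_of_nodup hL])

end Cycles

section Joyal

variable [LinearOrder V] [Finite V]

noncomputable def cyclesToPath (g : V → V) : V → V := relink (cycleList g) (cycleList g).tail g

noncomputable def pathToCycles (f : V → V) (b : V) : V → V :=
  relink (spine f b).toFinset.sort (spine f b) f

lemma rootedAt_cyclesToPath [Nonempty V] (g : V → V) :
    RootedAt (cyclesToPath g) ((cycleList g).getLast (cycleList_ne_nil g)) :=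
  rootedAt_getLast_of_relink_tail (nodup_cycleList g) _ (relink_relink fun _ ↦ Iff.rfl)
    (exists_iterate_relink_mem (exists_iterate_mem_cycleList g))

lemma pathToCycles_cyclesToPath [Nonempty V] (g : V → V) :
    pathToCycles (cyclesToPath g) ((cycleList g).head (cycleList_ne_nil g)) = g := by
  have hf : relink (cycleList g) (cycleList g).tail (cyclesToPath g) = cyclesToPath g :=
    relink_relink fun _ ↦ Iff.rfl
  have hspine :
      spine (cyclesToPath g) ((cycleList g).head (cycleList_ne_nil g)) = cycleList g := by
    have hL := nodup_cycleList g
    generalize cycleList g = L, cycleList_ne_nil g = hne at hf hL ⊢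
    obtain ⟨b, M, rfl⟩ := List.exists_cons_of_ne_nil hne
    exact spine_eq_of_relink hL hf
  rw [pathToCycles, hspine, cyclesToPath, relink_relink (by simp), relink_cycleList]

namespace RootedAt

variable {f : V → V} {r : V}

lemma cycleList_pathToCycles (hf : RootedAt f r) (b : V) :
    cycleList (pathToCycles f b) = spine f b := by
  refine cycleList_eq (hf.nodup_spine b) (relink_relink fun _ ↦ Iff.rfl) fun v ↦ ?_
  have hreach (w : V) : ∃ k, f^[k] w ∈ (spine f b).toFinset.sort := by
    obtain ⟨k, hk⟩ := hf.exists_iterate_eq w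
    exact ⟨k, by simpa [hk] using hf.mem_spine b⟩
  simpa [pathToCycles] using exists_iterate_relink_mem (L := spine f b) hreach v

lemma cyclesToPath_pathToCycles (hf : RootedAt f r) (b : V) :
    cyclesToPath (pathToCycles f b) = f := by
  rw [cyclesToPath, hf.cycleList_pathToCycles, pathToCycles, relink_relink (by simp),
    hf.relink_spine]

lemma head_cycleList_pathToCycles (hf : RootedAt f r) (b : V)
    (h : cycleList (pathToCycles f b) ≠ []) :
    (cycleList (pathToCycles f b)).head h = b := by
  simp [hf.cycleList_pathToCycles, spine]

end RootedAt

variable [Nonempty V]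

noncomputable def joyal : (V → V) ≃ {p : (V → V) × V // ∃ r, RootedAt p.1 r} where
  toFun g :=
    ⟨(cyclesToPath g, (cycleList g).head (cycleList_ne_nil g)), _, rootedAt_cyclesToPath g⟩
  invFun p := pathToCycles p.1.1 p.1.2
  left_inv := pathToCycles_cyclesToPath
  right_inv := by
    rintro ⟨⟨f, b⟩, r, hf⟩
    exact Subtype.ext <|
      Prod.ext (hf.cyclesToPath_pathToCycles b) (hf.head_cycleList_pathToCycles b _)

end Joyal

theorem card_rootedAt_mul_card_sq [Finite V] (r : V) :
    Nat.card {f : V → V // RootedAt f r} * Nat.card V ^ 2 = Nat.card V ^ Nat.card V := by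
  obtain ⟨n, ⟨e⟩⟩ := Finite.exists_equiv_fin V
  let := LinearOrder.lift' e e.injective
  have : Nonempty V := ⟨r⟩
  rw [← Nat.card_fun, Nat.card_congr joyal, Nat.card_congr
    (Equiv.prodSubtypeFstEquivSubtypeProd (p := fun f : V → V ↦ ∃ r, RootedAt f r)),
    Nat.card_prod, card_exists_rootedAt r]
  ring

theorem SimpleGraph.card_isTree [Finite V] [Nonempty V] :
    Nat.card {G : SimpleGraph V // G.IsTree} = Nat.card V ^ (Nat.card V - 2) := by
  obtain ⟨r⟩ := ‹Nonempty V›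
  have hcount := card_rootedAt_mul_card_sq r
  rw [card_isTree_eq_card_rootedAt r]
  refine Nat.eq_of_mul_eq_mul_right (pow_pos Nat.card_pos 2) (hcount.trans ?_)
  obtain h | h : Nat.card V = 1 ∨ 2 ≤ Nat.card V := by have := Nat.card_pos (α := V); omega
  · simp [h]
  · rw [← pow_add, Nat.sub_add_cancel h]

/-- Cayley's formula: the number of labeled trees (connected acyclic graphs) on the
vertex set `{0,1,…,n}`, i.e. on `n+1` vertices, is `(n+1)^(n-1)`. -/
theorem card_trees (n : ℕ) :
    Nat.card {G : SimpleGraph (Fin (n + 1)) // G.IsTree} = (n + 1) ^ (n - 1) := by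
  rw [SimpleGraph.card_isTree, Nat.card_fin]
  rfl
end

section
/- For n ≥ 1, the expression (n!/(n+1)) · Σ_{j=0}^{⌊n/2⌋} (-1)^j · (2j+1)(n+1)^{n-2j} / (2^j · j! · (n-2j)!) is a positive integer. -/
open Finset

/-- Coefficient term of the Hermite-type polynomial, padded by zero. -/
def Tk (x : ℚ) (k j : ℕ) : ℚ :=
  if 2*j ≤ k then (-1)^j * x^(k-2*j) * (k.factorial : ℚ) /
    (2^j * (j.factorial : ℚ) * ((k-2*j).factorial : ℚ)) else 0

/-- The Hermite-type polynomial `He_k` evaluated at `x`. -/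
def Sk (x : ℚ) (k : ℕ) : ℚ := ∑ j ∈ range (k+1), Tk x k j

/-- Integer version of `He_k (n+1)`. -/
def aseq (n : ℕ) : ℕ → ℤ
  | 0 => 1
  | 1 => (n : ℤ) + 1
  | (k+2) => ((n:ℤ)+1) * aseq n (k+1) - ((k:ℤ)+1) * aseq n k

lemma fact_cast_succ (m : ℕ) : (((m+1).factorial : ℚ)) = ((m:ℚ)+1) * (m.factorial : ℚ) := by
  rw [Nat.factorial_succ]; push_cast; ring

lemma Tk_zero (x : ℚ) (k : ℕ) : Tk x k 0 = x ^ k := by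
  unfold Tk
  rw [if_pos (by omega)]
  simp [Nat.factorial_ne_zero]

lemma Tk_big' (x : ℚ) (k j : ℕ) (h : k < 2*j) : Tk x k j = 0 := by
  unfold Tk; rw [if_neg (by omega)]

lemma termid (x : ℚ) (k j : ℕ) :
    Tk x (k+2) (j+1) = x * Tk x (k+1) (j+1) - ((k:ℚ)+1) * Tk x k j := by
  unfold Tk
  rcases le_or_gt (2*(j+1)) (k+1) with h1 | h1
  · have h2 : 2*(j+1) ≤ k+2 := by omega
    have h3 : 2*j ≤ k := by omega
    rw [if_pos h2, if_pos h1, if_pos h3]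
    obtain ⟨e, he⟩ : ∃ e, k = 2*j+1+e := ⟨k-(2*j+1), by omega⟩
    have e1 : k+2-2*(j+1) = e+1 := by omega
    have e2 : k+1-2*(j+1) = e := by omega
    have e3 : k-2*j = e+1 := by omega
    rw [e1, e2, e3]
    have hc : (k:ℚ) = 2*(j:ℚ)+1+(e:ℚ) := by exact_mod_cast congrArg (Nat.cast : ℕ → ℚ) he
    rw [show k+2 = (k+1)+1 from rfl, fact_cast_succ (k+1), fact_cast_succ k,
      fact_cast_succ e, fact_cast_succ j, pow_succ x e, pow_succ (2:ℚ) j]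
    have hne : ∀ m : ℕ, ((m.factorial : ℚ)) ≠ 0 := fun m => by positivity
    push_cast
    rw [hc]
    field_simp
    ring
  · rcases le_or_gt (2*(j+1)) (k+2) with h2 | h2
    · have h3 : k = 2*j := by omega
      subst h3
      rw [if_pos h2, if_neg (by omega), if_pos (le_refl _)]
      have e1 : 2*j+2-2*(j+1) = 0 := by omega
      have e2 : 2*j-2*j = 0 := by omega
      rw [e1, e2]
      rw [show 2*j+2 = (2*j+1)+1 from rfl, fact_cast_succ (2*j+1), fact_cast_succ (2*j),
        fact_cast_succ j, pow_succ (2:ℚ) j]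
      have hne : ∀ m : ℕ, ((m.factorial : ℚ)) ≠ 0 := fun m => by positivity
      push_cast
      field_simp
      ring
    · rw [if_neg (by omega), if_neg (by omega), if_neg (by omega)]
      ring

lemma Sk_step (x : ℚ) (k : ℕ) :
    Sk x (k+2) = x * Sk x (k+1) - ((k:ℚ)+1) * Sk x k := by
  unfold Sk
  rw [Finset.sum_range_succ' (fun j => Tk x (k+2) j) (k+2)]
  have : ∑ j ∈ range (k+2), Tk x (k+2) (j+1)
      = ∑ j ∈ range (k+2), (x * Tk x (k+1) (j+1) - ((k:ℚ)+1) * Tk x k j) :=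
    Finset.sum_congr rfl fun j _ => termid x k j
  rw [this, Finset.sum_sub_distrib, ← Finset.mul_sum, ← Finset.mul_sum, Tk_zero]
  rw [Finset.sum_range_succ (fun j => Tk x k j) (k+1), Tk_big' x k (k+1) (by omega)]
  rw [Finset.sum_range_succ (fun i => Tk x (k+1) (i+1)) (k+1), Tk_big' x (k+1) (k+2) (by omega),
    Finset.sum_range_succ' (fun j => Tk x (k+1) j) (k+1), Tk_zero]
  ring

lemma Sk_zero (x : ℚ) : Sk x 0 = 1 := by
  simp [Sk, Tk, Nat.factorial_ne_zero]

lemma Sk_one (x : ℚ) : Sk x 1 = x := by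
  rw [Sk, Finset.sum_range_succ, Finset.sum_range_succ, Finset.sum_range_zero,
    Tk_big' x 1 1 (by omega)]
  unfold Tk
  rw [if_pos (by omega)]
  simp [Nat.factorial_ne_zero]

lemma Sk_eq_aseq (n : ℕ) : ∀ k, Sk ((n:ℚ)+1) k = ((aseq n k : ℤ) : ℚ) := by
  intro k
  induction k using Nat.strong_induction_on with
  | _ k ih =>
    match k with
    | 0 => simp [Sk_zero, aseq]
    | 1 => simp [Sk_one, aseq]
    | (k+2) =>
      rw [Sk_step, ih (k+1) (by omega), ih k (by omega)]
      show _ = ((aseq n (k+2) : ℤ) : ℚ)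
      rw [show aseq n (k+2) = ((n:ℤ)+1) * aseq n (k+1) - ((k:ℤ)+1) * aseq n k from rfl]
      push_cast
      ring

lemma aseq_mono (n : ℕ) : ∀ k, k ≤ n → 1 ≤ aseq n k ∧ aseq n k ≤ aseq n (k+1) := by
  intro k
  induction k with
  | zero =>
    intro _
    refine ⟨le_refl _, ?_⟩
    show (1:ℤ) ≤ (n:ℤ) + 1
    have : (0:ℤ) ≤ (n:ℤ) := Int.natCast_nonneg n
    linarith
  | succ k ih =>
    intro hk
    obtain ⟨h1, h2⟩ := ih (by omega)
    refine ⟨le_trans h1 h2, ?_⟩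
    show aseq n (k+1) ≤ ((n:ℤ)+1) * aseq n (k+1) - ((k:ℤ)+1) * aseq n k
    have hkn : (k:ℤ) + 1 ≤ (n:ℤ) := by exact_mod_cast hk
    nlinarith

lemma aseq_c (n : ℕ) (hn : 1 ≤ n) : ∀ k, 1 ≤ k → k ≤ n →
    1 ≤ aseq n k - (k:ℤ) * aseq n (k-1) := by
  intro k
  induction k with
  | zero => omega
  | succ k ih =>
    intro _ hk
    match k, ih with
    | 0, _ =>
      show (1:ℤ) ≤ aseq n 1 - ((0:ℕ)+1 : ℤ) * aseq n 0
      show (1:ℤ) ≤ ((n:ℤ)+1) - ((0:ℕ)+1 : ℤ) * 1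
      have : (1:ℤ) ≤ (n:ℤ) := by exact_mod_cast hn
      push_cast
      linarith
    | (k+1), ih =>
      have hc := ih (by omega) (by omega)
      have ha := (aseq_mono n (k+1) (by omega)).1
      have hrec : aseq n (k+2) = ((n:ℤ)+1) * aseq n (k+1) - ((k:ℤ)+1) * aseq n k := rfl
      have hkn : (k:ℤ) + 2 ≤ (n:ℤ) := by exact_mod_cast hk
      simp only [Nat.add_sub_cancel] at hc ⊢
      push_cast
      push_cast at hc
      nlinarith

lemma keyterm (n j : ℕ) (hn : 1 ≤ n) :
    (if 2*j ≤ n then (n.factorial:ℚ)/((n:ℚ)+1) *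
      ((-1:ℚ)^j * ((2*(j:ℚ)+1) * ((n:ℚ)+1)^(n-2*j)) /
        (2^j * (j.factorial:ℚ) * ((n-2*j).factorial:ℚ))) else 0)
    = Tk ((n:ℚ)+1) n j - (n:ℚ) * Tk ((n:ℚ)+1) (n-1) j := by
  rcases le_or_gt (2*j) (n-1) with h1 | h1
  · have h3 : 2*j ≤ n := by omega
    rw [if_pos h3]
    unfold Tk
    rw [if_pos h3, if_pos h1]
    obtain ⟨e, he⟩ : ∃ e, n = 2*j+1+e := ⟨n-(2*j+1), by omega⟩
    have e1 : n-2*j = e+1 := by omega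
    have e2 : n-1-2*j = e := by omega
    rw [e1, e2]
    have hc : (n:ℚ) = 2*(j:ℚ)+1+(e:ℚ) := by exact_mod_cast congrArg (Nat.cast : ℕ → ℚ) he
    have hfn : (n.factorial : ℚ) = (n:ℚ) * ((n-1).factorial : ℚ) := by
      obtain ⟨p, rfl⟩ : ∃ p, n = p+1 := ⟨n-1, by omega⟩
      simp only [Nat.add_sub_cancel]
      rw [fact_cast_succ]; push_cast; ring
    rw [hfn, fact_cast_succ e, pow_succ ((n:ℚ)+1) e]
    have hne : ∀ m : ℕ, ((m.factorial : ℚ)) ≠ 0 := fun m => by positivity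
    have hn1 : ((n:ℚ)+1) ≠ 0 := by positivity
    rw [hc]
    field_simp
    ring
  · rcases le_or_gt (2*j) n with h3 | h3
    · have h4 : n = 2*j := by omega
      rw [if_pos h3, Tk_big' _ (n-1) j (by omega)]
      unfold Tk
      rw [if_pos h3]
      have e1 : n-2*j = 0 := by omega
      rw [e1]
      have hc : (n:ℚ) = 2*(j:ℚ) := by exact_mod_cast congrArg (Nat.cast : ℕ → ℚ) h4
      have hne : ∀ m : ℕ, ((m.factorial : ℚ)) ≠ 0 := fun m => by positivity
      have hn1 : ((n:ℚ)+1) ≠ 0 := by positivity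
      rw [hc]
      field_simp
      ring
    · rw [if_neg (by omega), Tk_big' _ n j (by omega), Tk_big' _ (n-1) j (by omega)]
      ring

/-- For `n ≥ 1`, Takács' expression is a positive integer. -/
theorem takacs_pos_integer (n : ℕ) (hn : 1 ≤ n) :
    ∃ m : ℕ, 0 < m ∧
      (n.factorial : ℚ) / (n + 1) *
        ∑ j ∈ Finset.range (n / 2 + 1),
          (-1 : ℚ) ^ j * ((2 * j + 1) * ((n : ℚ) + 1) ^ (n - 2 * j)) /
            (2 ^ j * (j.factorial : ℚ) * ((n - 2 * j).factorial : ℚ)) = m := by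
  have hpos := aseq_c n hn n hn (le_refl n)
  refine ⟨(aseq n n - (n:ℤ) * aseq n (n-1)).toNat, ?_, ?_⟩
  · generalize hA : aseq n n - (n:ℤ) * aseq n (n-1) = A at hpos ⊢
    omega
  · have step1 : (n.factorial : ℚ) / (n + 1) *
        ∑ j ∈ Finset.range (n / 2 + 1),
          (-1 : ℚ) ^ j * ((2 * j + 1) * ((n : ℚ) + 1) ^ (n - 2 * j)) /
            (2 ^ j * (j.factorial : ℚ) * ((n - 2 * j).factorial : ℚ))
        = ∑ j ∈ Finset.range (n+1),
            (if 2*j ≤ n then (n.factorial:ℚ)/((n:ℚ)+1) *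
              ((-1:ℚ)^j * ((2*(j:ℚ)+1) * ((n:ℚ)+1)^(n-2*j)) /
                (2^j * (j.factorial:ℚ) * ((n-2*j).factorial:ℚ))) else 0) := by
      rw [Finset.mul_sum]
      have e1 : ∀ j ∈ Finset.range (n/2+1),
          (n.factorial:ℚ)/((n:ℚ)+1) *
            ((-1:ℚ)^j * ((2*(j:ℚ)+1) * ((n:ℚ)+1)^(n-2*j)) /
              (2^j * (j.factorial:ℚ) * ((n-2*j).factorial:ℚ)))
          = (if 2*j ≤ n then (n.factorial:ℚ)/((n:ℚ)+1) *
              ((-1:ℚ)^j * ((2*(j:ℚ)+1) * ((n:ℚ)+1)^(n-2*j)) /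
                (2^j * (j.factorial:ℚ) * ((n-2*j).factorial:ℚ))) else 0) := by
        intro j hj
        rw [if_pos (by have := Finset.mem_range.mp hj; omega)]
      refine (Finset.sum_congr rfl e1).trans ?_
      exact Finset.sum_subset (Finset.range_subset_range.mpr (by omega))
        (fun j _ hj2 => if_neg (by
          have : ¬ j < n/2+1 := fun h => hj2 (Finset.mem_range.mpr h)
          omega))
    rw [step1, Finset.sum_congr rfl (fun j _ => keyterm n j hn),
      Finset.sum_sub_distrib, ← Finset.mul_sum]
    obtain ⟨p, rfl⟩ : ∃ p, n = p+1 := ⟨n-1, by omega⟩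
    simp only [Nat.add_sub_cancel] at hpos ⊢
    have h2 : ∑ j ∈ Finset.range (p+1+1), Tk ((p:ℚ)+1+1) p j = Sk ((p:ℚ)+1+1) p := by
      rw [Finset.sum_range_succ, Tk_big' _ p (p+1) (by omega), Sk, add_zero]
    have hx : ((p+1 : ℕ):ℚ) + 1 = ((p:ℚ)+1+1) := by push_cast; ring
    rw [hx, h2,
      show (∑ j ∈ Finset.range (p+1+1), Tk ((p:ℚ)+1+1) (p+1) j) = Sk ((p:ℚ)+1+1) (p+1) from rfl]
    have hS1 := Sk_eq_aseq (p+1) (p+1)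
    have hS2 := Sk_eq_aseq (p+1) p
    rw [show ((p+1 : ℕ):ℚ) + 1 = ((p:ℚ)+1+1) from by push_cast; ring] at hS1 hS2
    rw [hS1, hS2]
    have hA0 : (0:ℤ) ≤ aseq (p+1) (p+1) - ((p+1:ℕ):ℤ) * aseq (p+1) p := by linarith
    rw [show (((aseq (p+1) (p+1) - ((p+1:ℕ):ℤ) * aseq (p+1) p).toNat : ℕ) : ℚ)
        = ((aseq (p+1) (p+1) - ((p+1:ℕ):ℤ) * aseq (p+1) p : ℤ) : ℚ) from by
      rw [← Int.cast_natCast, Int.toNat_of_nonneg hA0]]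
    push_cast
    ring
end
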